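/- arXiv:1609.09551 — 9 statements merged into one kernel-verified Lean document; each statement's English description precedes it below -/
import Mathlib

section
/- Let n ≥ 2 and let Y = Σ_{1≤i<j≤n} a_{ij}E_{ij} be a strictly upper triangular n×n complex matrix (E_{ij} the elementary matrix with 1 in position (i,j)) such that a_{i,i+1} ≠ 0 for all 1 ≤ i ≤ n−1. Then there exist g ∈ G_0 = SL_n(A) and h in the Iwahori subgroup 𝓑 such that g·κ = Ȳ·h in SL_n(F). -/
/-! Since `Y` is nilpotent, `Ȳ (t - Y) = t`, so `g κ = Ȳ h` follows from `(t - Y) g κ = t h`.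
Take for `g` the matrix with columns `e₂, …, eₙ, μ u`, where `u = t ^ (n - 1) Ȳ eₙ` has polynomial
entries and satisfies `(t - Y) u = tⁿ eₙ`. Then `h` has columns `(t - Y) e₂, …, (t - Y) eₙ, μ eₙ`:
it is integral, and its constant term is upper triangular because `Y` is strictly upper triangular.
The constant term of `u₁` is `(Yⁿ⁻¹)₁ₙ = ∏ a_{i,i+1} ≠ 0`, so `u₁` is a unit of `ℂ[[t]]` and
`μ = (-1) ^ (n - 1) u₁⁻¹` gives `det g = 1`; then `det h = 1` because `det (t - Y) = tⁿ`. -/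

noncomputable section

/-- The field of formal Laurent series over `ℂ`. -/
abbrev FF : Type := LaurentSeries ℂ

/-- The uniformizer `t` of `ℂ((t))`. -/
def tF : FF := HahnSeries.single (1 : ℤ) (1 : ℂ)

/-- An element of `F = ℂ((t))` is integral if it lies in `A = ℂ[[t]]`,
i.e. all coefficients of negative index vanish. -/
def Integral (x : FF) : Prop := ∀ m : ℤ, m < 0 → x.coeff m = 0

/-- Membership in `G₀ = SL_n(ℂ[[t]])`: all entries integral and determinant `1`. -/
def MemG0 {n : ℕ} (g : Matrix (Fin n) (Fin n) FF) : Prop :=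
  g.det = 1 ∧ ∀ i j : Fin n, Integral (g i j)

/-- Membership in the Iwahori subgroup `𝓑`: all entries integral, determinant `1`,
and the matrix of constant terms `h(0)` is upper triangular. -/
def MemIwahori {n : ℕ} (h : Matrix (Fin n) (Fin n) FF) : Prop :=
  h.det = 1 ∧ (∀ i j : Fin n, Integral (h i j)) ∧
    ∀ i j : Fin n, (j : ℕ) < (i : ℕ) → (h i j).coeff 0 = 0

/-- The element `κ = diag(t, t, …, t, t^{-(n-1)})` of `SL_n(F)`. -/
def kappaMat (n : ℕ) : Matrix (Fin n) (Fin n) FF :=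
  Matrix.diagonal fun i => if (i : ℕ) = n - 1 then tF ^ (-((n : ℤ) - 1)) else tF

/-- A complex matrix viewed as a matrix over `F = ℂ((t))`. -/
def liftC {n : ℕ} (Y : Matrix (Fin n) (Fin n) ℂ) : Matrix (Fin n) (Fin n) FF :=
  Y.map (algebraMap ℂ FF)

/-- For a nilpotent complex matrix `Y`, the element
`Ȳ = Id + t⁻¹Y + t⁻²Y² + ⋯ + t^{-(n-1)}Y^{n-1}` of `SL_n(F)`. -/
def Ybar {n : ℕ} (Y : Matrix (Fin n) (Fin n) ℂ) : Matrix (Fin n) (Fin n) FF :=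
  ∑ k ∈ Finset.range n, tF ^ (-(k : ℤ)) • liftC (Y ^ k)

open PowerSeries Finset

namespace Matrix

variable {R : Type*} {n : ℕ} {Y : Matrix (Fin n) (Fin n) R}

theorem pow_apply_eq_zero_of_lt_add [Semiring R] (hY : ∀ i j : Fin n, (j : ℕ) ≤ i → Y i j = 0)
    (k : ℕ) {i j : Fin n} (h : (j : ℕ) < i + k) : (Y ^ k) i j = 0 := by
  induction k generalizing i with
  | zero => exact one_apply_ne (by rintro rfl; omega)
  | succ k ih =>
    rw [pow_succ', mul_apply]
    refine sum_eq_zero fun l _ => ?_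
    rcases le_or_gt (l : ℕ) i with hl | hl
    · rw [hY i l hl, zero_mul]
    · rw [ih (by omega), mul_zero]

theorem pow_eq_zero_of_strictUpper [Semiring R]
    (hY : ∀ i j : Fin n, (j : ℕ) ≤ i → Y i j = 0) : Y ^ n = 0 := by
  ext i j
  exact pow_apply_eq_zero_of_lt_add hY n (by omega)

theorem pow_apply_ne_zero_of_superdiag_ne_zero [Semiring R] [NoZeroDivisors R] [Nontrivial R]
    (hY : ∀ i j : Fin n, (j : ℕ) ≤ i → Y i j = 0)
    (hsuper : ∀ i j : Fin n, (j : ℕ) = i + 1 → Y i j ≠ 0)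
    (k : ℕ) {i j : Fin n} (h : (j : ℕ) = i + k) : (Y ^ k) i j ≠ 0 := by
  induction k generalizing i with
  | zero =>
    obtain rfl : i = j := Fin.ext (by omega)
    simp
  | succ k ih =>
    let i' : Fin n := ⟨i + 1, by omega⟩
    rw [pow_succ', mul_apply, Fintype.sum_eq_single i']
    · exact mul_ne_zero (hsuper i i' rfl) (ih (by simp [i']; omega))
    · intro l hl
      have hl' : (l : ℕ) ≠ i + 1 := fun e => hl (Fin.ext e)
      rcases le_or_gt (l : ℕ) i with hli | hli
      · rw [hY i l hli, zero_mul]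
      · rw [pow_apply_eq_zero_of_lt_add hY k (by omega), mul_zero]

theorem det_smul_one_sub_of_strictUpper [CommRing R] (x : R)
    (hY : ∀ i j : Fin n, (j : ℕ) ≤ i → Y i j = 0) : (x • 1 - Y).det = x ^ n := by
  rw [det_of_isUpperTriangular fun i j hij => ?_]
  · simp [hY]
  · have hij : j < i := hij
    simp [one_apply_ne hij.ne', hY i j hij.le]

theorem geom_sum_zpow_smul_mul_smul_one_sub [Field R] {t : R} (ht : t ≠ 0) (hY : Y ^ n = 0) :
    (∑ i ∈ range n, t ^ (-(i : ℤ)) • Y ^ i) * (t • 1 - Y) = t • 1 := by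
  have hZ : ∀ i : ℕ, t ^ (-(i : ℤ)) • Y ^ i = (t⁻¹ • Y) ^ i := fun i => by
    rw [smul_pow, _root_.zpow_neg, zpow_natCast, inv_pow]
  have hN : t • 1 - Y = t • (1 - t⁻¹ • Y) := by
    rw [smul_sub, smul_smul, mul_inv_cancel₀ ht, one_smul]
  rw [hN, sum_congr rfl fun i _ => hZ i, Matrix.mul_smul, geom_sum_mul_neg, smul_pow, hY,
    smul_zero, sub_zero]

theorem mul_eq_mul_of_mul_eq_smul_one {ι : Type*} [Fintype ι] [DecidableEq ι] [CommRing R]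
    [IsDomain R] {t : R} (ht : t ≠ 0) {B N G H D E : Matrix ι ι R} (hBN : B * N = t • 1)
    (hDE : D * E = t • 1) (hNG : N * G = H * D) : G * E = B * H := by
  apply smul_right_injective _ ht
  calc t • (G * E) = B * N * G * E := by rw [hBN, smul_one_mul, smul_mul_assoc]
    _ = B * H * (D * E) := by rw [mul_assoc B, hNG]; simp only [mul_assoc]
    _ = t • (B * H) := by rw [hDE, mul_smul_one]

end Matrix

section Resolvent

variable {R : Type*} [CommRing R] {n : ℕ}

/-- `X ^ n (X - Y)⁻¹` for `Y ^ n = 0`; its last column is the paper's `u = t ^ (n - 1) Ȳ eₙ`. -/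
def scaledResolvent (Y : Matrix (Fin n) (Fin n) R) :
    Matrix (Fin n) (Fin n) R⟦X⟧ :=
  ∑ k ∈ range n, (X : R⟦X⟧) ^ k • Y.map C ^ (n - 1 - k)

theorem sub_mul_scaledResolvent {Y : Matrix (Fin n) (Fin n) R} (hY : Y ^ n = 0) :
    ((X : R⟦X⟧) • 1 - Y.map C) * scaledResolvent Y = (X : R⟦X⟧) ^ n • 1 := by
  have hYC : Y.map C ^ n = 0 := by rw [← Matrix.map_pow, hY, Matrix.map_zero _ (map_zero C)]
  calc ((X : R⟦X⟧) • 1 - Y.map C) * scaledResolvent Y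
      = ((X : R⟦X⟧) • 1 - Y.map C) *
          ∑ k ∈ range n, ((X : R⟦X⟧) • 1) ^ k * Y.map C ^ (n - 1 - k) := by
        simp only [scaledResolvent, smul_pow, one_pow, smul_mul_assoc, one_mul]
    _ = ((X : R⟦X⟧) • 1) ^ n - Y.map C ^ n :=
        ((Commute.one_left _).smul_left _).mul_geom_sum₂ n
    _ = (X : R⟦X⟧) ^ n • 1 := by rw [hYC, sub_zero, smul_pow, one_pow]

theorem constantCoeff_scaledResolvent_apply [NeZero n] (Y : Matrix (Fin n) (Fin n) R)
    (i j : Fin n) : constantCoeff (scaledResolvent Y i j) = (Y ^ (n - 1)) i j := by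
  simp only [scaledResolvent, Matrix.sum_apply, Matrix.smul_apply, smul_eq_mul, map_sum,
    map_mul, map_pow, constantCoeff_X, ← Matrix.map_pow, Matrix.map_apply, constantCoeff_C]
  rw [sum_eq_single 0 (fun k _ hk => by simp [zero_pow hk]) (fun h => by simp_all)]
  simp

end Resolvent

section Construction

variable {K : Type*} [Field K] {m : ℕ} (Y : Matrix (Fin (m + 1)) (Fin (m + 1)) K)

def gScale : K⟦X⟧ := (-1) ^ m * (scaledResolvent Y 0 (Fin.last m))⁻¹

/-- The paper's `g`: columns `e₂, …, eₙ, μ u`, with `μ = gScale Y`. -/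
def gMat : Matrix (Fin (m + 1)) (Fin (m + 1)) K⟦X⟧ :=
  Matrix.of fun i j =>
    if j = Fin.last m then gScale Y * scaledResolvent Y i (Fin.last m)
    else (1 : Matrix (Fin (m + 1)) (Fin (m + 1)) K⟦X⟧) i (j + 1)

/-- The paper's `h = t⁻¹ (t - Y) g κ`: columns `(X - Y) e₂, …, (X - Y) eₙ, μ eₙ`. -/
def hMat : Matrix (Fin (m + 1)) (Fin (m + 1)) K⟦X⟧ :=
  Matrix.of fun i j =>
    if j = Fin.last m then (Pi.single (Fin.last m) (gScale Y) : Fin (m + 1) → K⟦X⟧) i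
    else ((X : K⟦X⟧) • 1 - Y.map C) i (j + 1)

variable (m) in
def lastDiag : Matrix (Fin (m + 1)) (Fin (m + 1)) K⟦X⟧ :=
  Matrix.diagonal fun j => if j = Fin.last m then X ^ (m + 1) else 1

theorem sub_mul_gMat (hY : Y ^ (m + 1) = 0) :
    ((X : K⟦X⟧) • 1 - Y.map C) * gMat Y = hMat Y * lastDiag m := by
  refine Matrix.ext fun i j => ?_
  rw [lastDiag, Matrix.mul_diagonal, Matrix.mul_apply]
  by_cases hj : j = Fin.last m
  · subst hj
    have hu := congrFun₂ (sub_mul_scaledResolvent hY) i (Fin.last m)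
    rw [Matrix.mul_apply] at hu
    simp only [gMat, hMat, Matrix.of_apply, if_true, mul_left_comm _ (gScale Y), ← mul_sum, hu]
    rcases eq_or_ne i (Fin.last m) with rfl | hi <;> simp [*, mul_comm]
  · simp only [gMat, hMat, Matrix.of_apply, if_neg hj, mul_one, ← Matrix.mul_apply]

theorem det_gMat (hu : constantCoeff (scaledResolvent Y 0 (Fin.last m)) ≠ 0) :
    (gMat Y).det = 1 := by
  -- Expand along the last column: row `0` of `gMat Y` vanishes off that column.
  rw [Matrix.det_succ_column _ (Fin.last m), Fintype.sum_eq_single 0]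
  · have hminor : (gMat Y).submatrix (Fin.succAbove 0) (Fin.last m).succAbove = 1 := by
      refine Matrix.ext fun r c => ?_
      simp [gMat, Fin.coeSucc_eq_succ, Matrix.one_apply]
    rw [hminor, Matrix.det_one, mul_one, gMat, Matrix.of_apply, if_pos rfl, gScale, mul_assoc,
      PowerSeries.inv_mul_cancel _ hu]
    simp [← mul_pow]
  · intro i hi
    have : NeZero m := ⟨by rintro rfl; exact hi (Subsingleton.elim _ _)⟩
    refine mul_eq_zero_of_right _ (Matrix.det_eq_zero_of_row_eq_zero 0 fun c => ?_)
    simp [gMat, Fin.succAbove_ne_zero_zero hi, Fin.coeSucc_eq_succ, Matrix.one_apply,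
      (Fin.succ_ne_zero c).symm]

theorem det_hMat (hY : ∀ i j : Fin (m + 1), (j : ℕ) ≤ i → Y i j = 0)
    (hu : constantCoeff (scaledResolvent Y 0 (Fin.last m)) ≠ 0) : (hMat Y).det = 1 := by
  have h := congrArg Matrix.det (sub_mul_gMat Y (Matrix.pow_eq_zero_of_strictUpper hY))
  rw [Matrix.det_mul, Matrix.det_mul, det_gMat Y hu, mul_one, lastDiag, Matrix.det_diagonal,
    prod_ite_eq' univ (Fin.last m), if_pos (mem_univ _),
    Matrix.det_smul_one_sub_of_strictUpper X fun i j hij => by simp [hY i j hij]] at h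
  exact (mul_eq_right₀ (pow_ne_zero _ X_ne_zero)).mp h.symm

theorem constantCoeff_hMat_of_lt (hY : ∀ i j : Fin (m + 1), (j : ℕ) ≤ i → Y i j = 0)
    {i j : Fin (m + 1)} (hij : (j : ℕ) < i) : constantCoeff (hMat Y i j) = 0 := by
  have hj : j ≠ Fin.last m := by rintro rfl; have := i.isLt; simp at hij; omega
  have hj1 : ((j + 1 : Fin (m + 1)) : ℕ) = j + 1 :=
    Fin.val_add_one_of_lt (Fin.lt_last_iff_ne_last.mpr hj)
  simp [hMat, hj, Matrix.one_apply, apply_ite, hY i (j + 1) (by omega)]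

end Construction

local notation "ι" => HahnSeries.ofPowerSeries ℤ ℂ

theorem tF_ne_zero : tF ≠ 0 := HahnSeries.single_ne_zero one_ne_zero

theorem ofPowerSeries_X_eq_tF : ι X = tF := HahnSeries.ofPowerSeries_X

theorem ofPowerSeries_C_eq_algebraMap (a : ℂ) : ι (C a) = algebraMap ℂ FF a := by
  rw [HahnSeries.algebraMap_apply', PowerSeries.algebraMap_eq]

theorem integral_ofPowerSeries (f : ℂ⟦X⟧) : Integral (ι f) := by
  intro m hm
  rw [HahnSeries.ofPowerSeries_apply]
  refine HahnSeries.embDomain_of_notMem_range fun ⟨k, hk⟩ => ?_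
  have hk : ((k : ℕ) : ℤ) = m := hk
  omega

theorem coeff_zero_ofPowerSeries (f : ℂ⟦X⟧) : (ι f).coeff 0 = constantCoeff f := by
  simpa using HahnSeries.ofPowerSeries_apply_coeff (Γ := ℤ) f 0

section Transfer

variable {n : ℕ}

theorem memG0_map {G : Matrix (Fin n) (Fin n) ℂ⟦X⟧} (hG : G.det = 1) : MemG0 (G.map ι) :=
  ⟨by rw [← RingHom.mapMatrix_apply, ← RingHom.map_det, hG, map_one],
    fun _ _ => integral_ofPowerSeries _⟩

theorem memIwahori_map {H : Matrix (Fin n) (Fin n) ℂ⟦X⟧} (hH : H.det = 1)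
    (hH0 : ∀ i j : Fin n, (j : ℕ) < i → constantCoeff (H i j) = 0) : MemIwahori (H.map ι) :=
  ⟨(memG0_map hH).1, fun _ _ => integral_ofPowerSeries _,
    fun i j hij => by rw [Matrix.map_apply, coeff_zero_ofPowerSeries, hH0 i j hij]⟩

theorem map_smul_one_sub (Y : Matrix (Fin n) (Fin n) ℂ) :
    ((X : ℂ⟦X⟧) • 1 - Y.map C).map ι = tF • 1 - liftC Y := by
  refine Matrix.ext fun i j => ?_
  simp only [Matrix.map_apply, Matrix.sub_apply, Matrix.smul_apply, smul_eq_mul, map_sub,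
    map_mul, ofPowerSeries_X_eq_tF, liftC, ofPowerSeries_C_eq_algebraMap, Matrix.one_apply,
    apply_ite, map_one, map_zero]

theorem Ybar_mul_smul_one_sub {Y : Matrix (Fin n) (Fin n) ℂ} (hY : Y ^ n = 0) :
    Ybar Y * (tF • 1 - liftC Y) = tF • 1 := by
  have hpow : ∀ k, liftC (Y ^ k) = liftC Y ^ k := fun k => Matrix.map_pow _ _ _
  rw [Ybar, sum_congr rfl fun k _ => congrArg _ (hpow k)]
  refine Matrix.geom_sum_zpow_smul_mul_smul_one_sub tF_ne_zero ?_
  rw [← hpow, hY, liftC, Matrix.map_zero _ (map_zero _)]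

end Transfer

variable {m : ℕ}

theorem lastDiag_map_mul_kappaMat : (lastDiag m).map ι * kappaMat (m + 1) = tF • 1 := by
  rw [lastDiag, kappaMat, Matrix.diagonal_map (map_zero _), Matrix.diagonal_mul_diagonal,
    Matrix.smul_one_eq_diagonal]
  congr 1
  funext j
  by_cases hj : j = Fin.last m
  · subst hj
    rw [if_pos rfl, if_pos (by simp), map_pow, ofPowerSeries_X_eq_tF, ← zpow_natCast,
      ← zpow_add₀ tF_ne_zero]
    norm_num
  · have hj' : (j : ℕ) ≠ m + 1 - 1 := fun h => hj (Fin.ext h)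
    rw [if_neg hj, if_neg hj', map_one, one_mul]

theorem map_mul_kappaMat_eq_Ybar_mul {Y : Matrix (Fin (m + 1)) (Fin (m + 1)) ℂ}
    {G H : Matrix (Fin (m + 1)) (Fin (m + 1)) ℂ⟦X⟧} (hY : Y ^ (m + 1) = 0)
    (hGH : ((X : ℂ⟦X⟧) • 1 - Y.map C) * G = H * lastDiag m) :
    G.map ι * kappaMat (m + 1) = Ybar Y * H.map ι :=
  Matrix.mul_eq_mul_of_mul_eq_smul_one tF_ne_zero (Ybar_mul_smul_one_sub hY)
    lastDiag_map_mul_kappaMat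
    (by rw [← map_smul_one_sub, ← Matrix.map_mul, hGH, Matrix.map_mul])

/-- If `Y` is strictly upper triangular with all superdiagonal entries
nonzero, then there are `g ∈ G₀` and `h ∈ 𝓑` with `g·κ = Ȳ·h`. -/
theorem stmt0 {n : ℕ} (hn : 2 ≤ n) (Y : Matrix (Fin n) (Fin n) ℂ)
    (hupper : ∀ i j : Fin n, (j : ℕ) ≤ (i : ℕ) → Y i j = 0)
    (hsuper : ∀ i j : Fin n, (j : ℕ) = (i : ℕ) + 1 → Y i j ≠ 0) :
    ∃ g h : Matrix (Fin n) (Fin n) FF,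
      MemG0 g ∧ MemIwahori h ∧ g * kappaMat n = Ybar Y * h := by
  obtain ⟨m, rfl⟩ : ∃ m, n = m + 1 := ⟨n - 1, by omega⟩
  have hu : constantCoeff (scaledResolvent Y 0 (Fin.last m)) ≠ 0 := by
    rw [constantCoeff_scaledResolvent_apply]
    exact Matrix.pow_apply_ne_zero_of_superdiag_ne_zero hupper hsuper m (by simp)
  have hY := Matrix.pow_eq_zero_of_strictUpper hupper
  exact ⟨_, _, memG0_map (det_gMat Y hu),
    memIwahori_map (det_hMat Y hupper hu) fun _ _ => constantCoeff_hMat_of_lt Y hupper,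
    map_mul_kappaMat_eq_Ybar_mul hY (sub_mul_gMat Y hY)⟩

end
end

section
/- Let N_1, N_2 be nilpotent n×n complex matrices. If every entry of the matrix (Id − t^{−1}N_2)·(Id + t^{−1}N_1 + t^{−2}N_1² + ⋯ + t^{−(n−1)}N_1^{n−1}) ∈ M_n(F) lies in the subring A = ℂ[[t]], then N_1 = N_2. (This is the injectivity of the map ψ : 𝒩 → SL_n(F)/G_0, N ↦ (Id + t^{−1}N + t^{−2}N² + ⋯) mod G_0, where 𝒩 is the variety of nilpotent n×n matrices.) -/
/-! Statement 2: injectivity of Lusztig's map `ψ : 𝒩 → SL_n(F)/G₀`,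
`N ↦ (Id + t⁻¹N + t⁻²N² + ⋯) mod G₀`. -/

noncomputable section

noncomputable section

/-! The coefficient of `t⁻¹` in `(Id − t⁻¹N₂)(Id + t⁻¹N₁ + ⋯)` is `N₁ − N₂` as soon as `n ≥ 2`,
so integrality forces `N₁ = N₂`. For `n = 1` the same coefficient is `−N₂`, and the nilpotent
`1 × 1` matrix `N₁` vanishes. -/

theorem Matrix.eq_zero_of_isNilpotent_of_subsingleton {m A : Type*} [Fintype m] [DecidableEq m]
    [Subsingleton m] [Semiring A] [IsReduced A] {M : Matrix m m A} (hM : IsNilpotent M) :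
    M = 0 := by
  obtain ⟨k, hk⟩ := hM
  ext i j
  obtain rfl := Subsingleton.elim i j
  have hpow (k : ℕ) : (M ^ k) i i = M i i ^ k := by
    induction k with
    | zero => simp
    | succ k ih => rw [pow_succ, Matrix.mul_apply, Fintype.sum_subsingleton _ i, ih, pow_succ]
  exact IsNilpotent.eq_zero ⟨k, (hpow k).symm.trans (congrFun₂ hk i i)⟩

lemma tF_zpow (m : ℤ) : tF ^ m = HahnSeries.single m 1 :=
  (RatFunc.single_zpow m).symm

lemma liftC_mul {n : ℕ} (X Y : Matrix (Fin n) (Fin n) ℂ) :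
    liftC (X * Y) = liftC X * liftC Y :=
  Matrix.map_mul

lemma zpow_smul_liftC_apply {n : ℕ} (m : ℤ) (Y : Matrix (Fin n) (Fin n) ℂ) (i j : Fin n) :
    (tF ^ m • liftC Y) i j = HahnSeries.single m (Y i j) := by
  rw [Matrix.smul_apply, smul_eq_mul, tF_zpow, liftC, Matrix.map_apply,
    HahnSeries.algebraMap_apply', PowerSeries.algebraMap_apply, Algebra.algebraMap_self,
    RingHom.id_apply, HahnSeries.ofPowerSeries_C, HahnSeries.C_apply,
    HahnSeries.single_mul_single, add_zero, one_mul]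

lemma coeff_sum_zpow_neg_smul_liftC_apply {n : ℕ} (s : Finset ℕ)
    (f : ℕ → Matrix (Fin n) (Fin n) ℂ) (m : ℕ) (i j : Fin n) :
    ((∑ k ∈ s, tF ^ (-(k : ℤ)) • liftC (f k)) i j).coeff (-(m : ℤ)) =
      if m ∈ s then f m i j else 0 := by
  simp only [Matrix.sum_apply, HahnSeries.coeff_sum, zpow_smul_liftC_apply,
    HahnSeries.coeff_single, neg_inj, Nat.cast_inj]
  exact Finset.sum_ite_eq s m (fun k => f k i j)

lemma liftC_mul_Ybar {n : ℕ} (X Y : Matrix (Fin n) (Fin n) ℂ) :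
    liftC X * Ybar Y = ∑ k ∈ Finset.range n, tF ^ (-(k : ℤ)) • liftC (X * Y ^ k) := by
  rw [Ybar, Finset.mul_sum]
  refine Finset.sum_congr rfl fun k _ => ?_
  rw [Matrix.mul_smul (liftC X) (tF ^ (-(k : ℤ))) (liftC (Y ^ k)), liftC_mul]

lemma coeff_neg_one_one_sub_mul_Ybar_apply {n : ℕ} (N₁ N₂ : Matrix (Fin n) (Fin n) ℂ)
    (i j : Fin n) :
    (((1 - tF⁻¹ • liftC N₂) * Ybar N₁) i j).coeff (-1) =
      (if 1 < n then N₁ i j else 0) - N₂ i j := by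
  have hshift : ((tF⁻¹ • (liftC N₂ * Ybar N₁)) i j).coeff (-1) =
      ((liftC N₂ * Ybar N₁) i j).coeff 0 := by
    rw [Matrix.smul_apply, smul_eq_mul, ← zpow_neg_one, tF_zpow]
    exact (HahnSeries.coeff_single_mul_add (r := (1 : ℂ)) (a := 0) (b := -1)).trans (one_mul _)
  have hYbar : (Ybar N₁ i j).coeff (-1) = if 1 < n then N₁ i j else 0 := by
    rw [Ybar]
    simpa using coeff_sum_zpow_neg_smul_liftC_apply (Finset.range n) (N₁ ^ ·) 1 i j
  have hprod : ((liftC N₂ * Ybar N₁) i j).coeff 0 = N₂ i j := by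
    simpa [liftC_mul_Ybar, i.pos] using
      coeff_sum_zpow_neg_smul_liftC_apply (Finset.range n) (N₂ * N₁ ^ ·) 0 i j
  rw [sub_mul, one_mul, Matrix.smul_mul tF⁻¹ (liftC N₂) (Ybar N₁), Matrix.sub_apply,
    HahnSeries.coeff_sub, hshift, hYbar, hprod]

theorem stmt2_general {n : ℕ} (N₁ N₂ : Matrix (Fin n) (Fin n) ℂ)
    (h₁ : IsNilpotent N₁)
    (hint : ∀ i j : Fin n, Integral (((1 - tF⁻¹ • liftC N₂) * Ybar N₁) i j)) :
    N₁ = N₂ := by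
  have hcoeff (i j : Fin n) : (if 1 < n then N₁ i j else 0) = N₂ i j := by
    have h := hint i j (-1) (by norm_num)
    rwa [coeff_neg_one_one_sub_mul_Ybar_apply, sub_eq_zero] at h
  by_cases hn : 1 < n
  · ext i j
    simpa [hn] using hcoeff i j
  · have : Subsingleton (Fin n) := Fin.subsingleton_iff_le_one.2 (not_lt.1 hn)
    obtain rfl : N₁ = 0 := Matrix.eq_zero_of_isNilpotent_of_subsingleton h₁
    ext i j
    simpa [hn] using hcoeff i j

/-- If `N₁, N₂` are nilpotent and every entry of
`(Id − t⁻¹N₂)·(Id + t⁻¹N₁ + ⋯ + t^{-(n-1)}N₁^{n-1})` is integral, then `N₁ = N₂`. -/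
theorem stmt2 {n : ℕ} (N₁ N₂ : Matrix (Fin n) (Fin n) ℂ)
    (h₁ : IsNilpotent N₁) (h₂ : IsNilpotent N₂)
    (hint : ∀ i j : Fin n, Integral (((1 - tF⁻¹ • liftC N₂) * Ybar N₁) i j)) :
    N₁ = N₂ :=
  stmt2_general N₁ N₂ h₁ hint
end
end
end

section
/- Let g_1, g_2 ∈ SL_n(ℂ) and let Y_1, Y_2 be strictly upper triangular n×n complex matrices. Suppose there exists x in the Iwahori subgroup 𝓑 such that g_1·Ȳ_1 = g_2·Ȳ_2·x in SL_n(F). Then b := g_2^{−1}g_1 is an upper triangular matrix in SL_n(ℂ) and Y_1 = b^{−1}·Y_2·b. (This is the injectivity of the map φ : T*(SL_n/B) → SL_n(F)/𝓑 given by φ(g,Y) = g·Ȳ mod 𝓑.) -/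
/-! Statement 3: injectivity of the map `φ : T*(SL_n/B) → SL_n(F)/𝓑`,
`φ(g, Y) = g·Ȳ mod 𝓑`. -/

noncomputable section

noncomputable section

/-!
Since `Ȳ₂⁻¹ = 1 - t⁻¹Y₂`, the Iwahori element is forced to be
`x = (1 - t⁻¹Y₂) · b · Ȳ₁ = b + t⁻¹(bY₁ - Y₂b) + (lower powers of t)`, with `b = g₂⁻¹g₁`.
Integrality of `x` kills the `t⁻¹`-coefficient, so `bY₁ = Y₂b`, and the Iwahori condition
on the constant term `x(0) = b` says that `b` is upper triangular.
-/

namespace Iwahori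

open Finset

variable {n : ℕ}

lemma algebraMap_eq_single (r : ℂ) : algebraMap ℂ FF r = HahnSeries.single 0 r := by
  rw [HahnSeries.algebraMap_apply', PowerSeries.algebraMap_apply]
  simp [HahnSeries.ofPowerSeries_C, HahnSeries.C_apply]

lemma tF_zpow (z : ℤ) : tF ^ z = HahnSeries.single z (1 : ℂ) :=
  (RatFunc.single_zpow z).symm

lemma tF_ne_zero : tF ≠ 0 :=
  HahnSeries.single_ne_zero one_ne_zero

lemma liftC_mul (A B : Matrix (Fin n) (Fin n) ℂ) : liftC (A * B) = liftC A * liftC B :=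
  map_mul (algebraMap ℂ FF).mapMatrix A B

lemma liftC_one : liftC (1 : Matrix (Fin n) (Fin n) ℂ) = 1 :=
  map_one (algebraMap ℂ FF).mapMatrix

lemma liftC_zero : liftC (0 : Matrix (Fin n) (Fin n) ℂ) = 0 :=
  map_zero (algebraMap ℂ FF).mapMatrix

lemma zpow_smul_liftC_mul (z w : ℤ) (A B : Matrix (Fin n) (Fin n) ℂ) :
    (tF ^ z • liftC A) * (tF ^ w • liftC B) = tF ^ (z + w) • liftC (A * B) := by
  rw [Matrix.smul_mul (tF ^ z) (liftC A), Matrix.mul_smul (liftC A) (tF ^ w), smul_smul,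
    ← zpow_add₀ tF_ne_zero, liftC_mul]

def coeffMat {ι κ : Type*} (m : ℤ) : Matrix ι κ FF →+ Matrix ι κ ℂ :=
  (HahnSeries.coeff.addMonoidHom m).mapMatrix

@[simp]
lemma coeffMat_apply {ι κ : Type*} (m : ℤ) (X : Matrix ι κ FF) (i : ι) (j : κ) :
    coeffMat m X i j = (X i j).coeff m :=
  rfl

lemma coeffMat_liftC_mul (m : ℤ) (A : Matrix (Fin n) (Fin n) ℂ) (X : Matrix (Fin n) (Fin n) FF) :
    coeffMat m (liftC A * X) = A * coeffMat m X := by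
  ext i j
  simp [Matrix.mul_apply, liftC, HahnSeries.coeff_sum, algebraMap_eq_single]

lemma coeffMat_zpow_smul {ι κ : Type*} (m z : ℤ) (X : Matrix ι κ FF) :
    coeffMat m (tF ^ z • X) = coeffMat (m - z) X := by
  ext i j
  simp [tF_zpow, HahnSeries.coeff_single_mul]

lemma coeffMat_liftC (m : ℤ) (A : Matrix (Fin n) (Fin n) ℂ) :
    coeffMat m (liftC A) = if m = 0 then A else 0 := by
  ext i j
  split_ifs <;> simp [liftC, algebraMap_eq_single, *]

lemma coeffMat_Ybar (m : ℤ) (Y : Matrix (Fin n) (Fin n) ℂ) :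
    coeffMat m (Ybar Y) = ∑ k ∈ range n, if m = -k then Y ^ k else 0 := by
  simp only [Ybar, map_sum, coeffMat_zpow_smul, coeffMat_liftC, sub_neg_eq_add,
    add_eq_zero_iff_eq_neg]

lemma coeffMat_neg_natCast_Ybar {Y : Matrix (Fin n) (Fin n) ℂ} (hY : Y ^ n = 0) (k : ℕ) :
    coeffMat (-k) (Ybar Y) = Y ^ k := by
  simp_rw [coeffMat_Ybar, neg_inj, Nat.cast_inj, sum_ite_eq, ite_eq_left_iff, mem_range, not_lt]
  exact fun hk => (pow_eq_zero_of_le hk hY).symm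

lemma coeffMat_one_Ybar (Y : Matrix (Fin n) (Fin n) ℂ) : coeffMat 1 (Ybar Y) = 0 := by
  rw [coeffMat_Ybar]
  exact sum_eq_zero fun k _ => if_neg (by omega)

lemma coeffMat_one_sub_mul (m : ℤ) (Z : Matrix (Fin n) (Fin n) ℂ)
    (X : Matrix (Fin n) (Fin n) FF) :
    coeffMat m ((1 - tF ^ (-1 : ℤ) • liftC Z) * X) = coeffMat m X - Z * coeffMat (m + 1) X := by
  rw [sub_mul, one_mul, Matrix.smul_mul (tF ^ (-1 : ℤ)) (liftC Z), map_sub, coeffMat_zpow_smul,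
    coeffMat_liftC_mul, sub_neg_eq_add]

lemma pow_apply_eq_zero_of_lt_add {Y : Matrix (Fin n) (Fin n) ℂ}
    (hY : ∀ i j : Fin n, (j : ℕ) ≤ i → Y i j = 0) (k : ℕ) {i j : Fin n} (hij : (j : ℕ) < i + k) :
    (Y ^ k) i j = 0 := by
  induction k generalizing j with
  | zero => exact Matrix.one_apply_ne (by rintro rfl; omega)
  | succ k ih =>
    rw [pow_succ, Matrix.mul_apply]
    refine sum_eq_zero fun l _ => ?_
    rcases lt_or_ge (l : ℕ) (i + k) with hl | hl
    · rw [ih hl, zero_mul]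
    · rw [hY l j (by omega), mul_zero]

lemma pow_eq_zero_of_strictUpper {Y : Matrix (Fin n) (Fin n) ℂ}
    (hY : ∀ i j : Fin n, (j : ℕ) ≤ i → Y i j = 0) : Y ^ n = 0 := by
  ext i j
  exact pow_apply_eq_zero_of_lt_add hY n (by omega)

lemma Ybar_mul_one_sub {Y : Matrix (Fin n) (Fin n) ℂ} (hY : Y ^ n = 0) :
    Ybar Y * (1 - tF ^ (-1 : ℤ) • liftC Y) = 1 := by
  have hterm : ∀ k : ℕ, (tF ^ (-(k : ℤ)) • liftC (Y ^ k)) * (1 - tF ^ (-1 : ℤ) • liftC Y) =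
      tF ^ (-(k : ℤ)) • liftC (Y ^ k) - tF ^ (-((k + 1 : ℕ) : ℤ)) • liftC (Y ^ (k + 1)) := by
    intro k
    rw [mul_sub, mul_one, zpow_smul_liftC_mul, ← pow_succ, Nat.cast_succ, neg_add]
  rw [Ybar, sum_mul, sum_congr rfl fun k _ => hterm k,
    sum_range_sub' (fun k : ℕ => tF ^ (-(k : ℤ)) • liftC (Y ^ k)), hY]
  ext i j
  simp [liftC_zero, liftC_one]

section

variable {g₁ g₂ Y₁ Y₂ : Matrix (Fin n) (Fin n) ℂ} {x : Matrix (Fin n) (Fin n) FF}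

lemma eq_of_mul_Ybar_eq (hg₂ : IsUnit g₂.det) (hY₂ : Y₂ ^ n = 0)
    (h : liftC g₁ * Ybar Y₁ = liftC g₂ * Ybar Y₂ * x) :
    x = (1 - tF ^ (-1 : ℤ) • liftC Y₂) * (liftC (g₂⁻¹ * g₁) * Ybar Y₁) := by
  have hY₂inv : (1 - tF ^ (-1 : ℤ) • liftC Y₂) * Ybar Y₂ = 1 :=
    mul_eq_one_comm.mp (Ybar_mul_one_sub hY₂)
  have hg₂inv : liftC g₂⁻¹ * liftC g₂ = 1 := by
    rw [← liftC_mul, Matrix.nonsing_inv_mul _ hg₂, liftC_one]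
  rw [liftC_mul, mul_assoc, h, ← mul_assoc (liftC g₂⁻¹), ← mul_assoc (liftC g₂⁻¹), hg₂inv,
    one_mul, ← mul_assoc, hY₂inv, one_mul]

lemma coeffMat_of_mul_Ybar_eq (hg₂ : IsUnit g₂.det) (hY₁ : Y₁ ^ n = 0) (hY₂ : Y₂ ^ n = 0)
    (h : liftC g₁ * Ybar Y₁ = liftC g₂ * Ybar Y₂ * x) :
    coeffMat 0 x = g₂⁻¹ * g₁ ∧ coeffMat (-1) x = g₂⁻¹ * g₁ * Y₁ - Y₂ * (g₂⁻¹ * g₁) := by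
  have hY₁0 := coeffMat_neg_natCast_Ybar hY₁ 0
  have hY₁1 := coeffMat_neg_natCast_Ybar hY₁ 1
  simp only [Nat.cast_zero, neg_zero, pow_zero, Nat.cast_one, pow_one] at hY₁0 hY₁1
  rw [eq_of_mul_Ybar_eq hg₂ hY₂ h, coeffMat_one_sub_mul, coeffMat_one_sub_mul, zero_add,
    neg_add_cancel, coeffMat_liftC_mul, coeffMat_liftC_mul, coeffMat_liftC_mul, coeffMat_one_Ybar,
    hY₁0, hY₁1]
  simp [mul_assoc]

end

end Iwahori

open Iwahori in
/-- If `g₁·Ȳ₁ = g₂·Ȳ₂·x` for some `x` in the Iwahori subgroup `𝓑`,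
with `g₁, g₂ ∈ SL_n(ℂ)` and `Y₁, Y₂` strictly upper triangular, then `b = g₂⁻¹g₁` is
upper triangular and `Y₁ = b⁻¹·Y₂·b`. -/
theorem stmt3 {n : ℕ} (g₁ g₂ : Matrix (Fin n) (Fin n) ℂ)
    (hg₁ : g₁.det = 1) (hg₂ : g₂.det = 1)
    (Y₁ Y₂ : Matrix (Fin n) (Fin n) ℂ)
    (hY₁ : ∀ i j : Fin n, (j : ℕ) ≤ (i : ℕ) → Y₁ i j = 0)
    (hY₂ : ∀ i j : Fin n, (j : ℕ) ≤ (i : ℕ) → Y₂ i j = 0)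
    (hx : ∃ x : Matrix (Fin n) (Fin n) FF, MemIwahori x ∧
      liftC g₁ * Ybar Y₁ = liftC g₂ * Ybar Y₂ * x) :
    (∀ i j : Fin n, (j : ℕ) < (i : ℕ) → (g₂⁻¹ * g₁) i j = 0) ∧
      Y₁ = (g₂⁻¹ * g₁)⁻¹ * Y₂ * (g₂⁻¹ * g₁) := by
  obtain ⟨x, ⟨-, hint, hlow⟩, h⟩ := hx
  obtain ⟨h0, h1⟩ := coeffMat_of_mul_Ybar_eq (by simp [hg₂]) (pow_eq_zero_of_strictUpper hY₁)
    (pow_eq_zero_of_strictUpper hY₂) h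
  refine ⟨fun i j hij => by rw [← h0]; exact hlow i j hij, ?_⟩
  have hcomm : g₂⁻¹ * g₁ * Y₁ = Y₂ * (g₂⁻¹ * g₁) := by
    rw [← sub_eq_zero, ← h1]
    ext i j
    exact hint i j (-1) (by norm_num)
  have hdet : IsUnit (g₂⁻¹ * g₁).det := by simp [hg₁, hg₂]
  rw [mul_assoc, ← hcomm]
  exact (Matrix.nonsing_inv_mul_cancel_left _ _ hdet).symm
end
end
end

section
/- In the Coxeter group W of affine type Ã_{n−1}, the word τ^{n−1} = (s_{n−1}s_{n−2}⋯s_1s_0)^{n−1} for κ is reduced; that is, ℓ(κ) = n(n−1). -/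
/-!
Let `s_i` act on `ℤ` by exchanging `x` and `x + 1` whenever `x ≡ i (mod n)`. For `n ≥ 3` these
affine permutations satisfy the Coxeter relations of `Ã_{n-1}`, so `W` acts on `ℤ`. A generator
moves every integer by at most one, hence `ℓ(w) ≥ |w(0)|`. On a multiple `kn` of `n` the factors
`s_0, s_1, …, s_{n-1}` of `τ` each push the point up by one, so `τ(kn) = (k+1)n` and
`κ(0) = n(n-1)`. This matches the length `n(n-1)` of the word `τ^{n-1}`.
-/

/-- The Coxeter matrix of affine type `Ã_{n-1}` on the index set `{0, 1, …, n-1}`: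
`M i i = 1`, `M i j = 3` if `i − j ≡ ±1 (mod n)`, and `M i j = 2` otherwise. -/
def affineA (n : ℕ) : CoxeterMatrix (Fin n) where
  M := Matrix.of fun i j : Fin n =>
    if i = j then 1
    else if ((i : ℕ) + 1) % n = (j : ℕ) ∨ ((j : ℕ) + 1) % n = (i : ℕ) then 3 else 2
  isSymm := by
    unfold Matrix.IsSymm
    ext i j
    simp only [Matrix.transpose_apply, Matrix.of_apply]
    rcases eq_or_ne i j with h | h
    · simp [h]
    · rw [if_neg h.symm, if_neg h]
      exact if_congr or_comm rfl rfl
  diagonal := by simp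
  off_diagonal := by
    intro i j h
    simp only [Matrix.of_apply, if_neg h]
    split <;> omega

variable {n : ℕ} {W : Type*} [Group W]

/-- The element `τ = s_{n-1}·s_{n-2}⋯s_1·s_0` of the affine Weyl group. -/
noncomputable def tauW (cs : CoxeterSystem (affineA n) W) : W :=
  cs.wordProd (List.finRange n).reverse

/-- The element `κ = τ^{n-1}`. -/
noncomputable def kappaW (cs : CoxeterSystem (affineA n) W) : W :=
  tauW cs ^ (n - 1)

theorem mul_pow_three_eq_one_of_braid {G : Type*} [Group G] {a b : G} (ha : a * a = 1)
    (hb : b * b = 1) (h : a * b * a = b * a * b) : (a * b) ^ 3 = 1 :=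
  calc (a * b) ^ 3 = a * b * a * (b * a * b) := by
        simp only [pow_succ, pow_zero, one_mul, mul_assoc]
    _ = a * (b * (a * a) * b) * a := by rw [← h]; group
    _ = 1 := by rw [ha, mul_one, hb, mul_one, ha]

namespace CoxeterSystem

variable {B : Type*} {M : CoxeterMatrix B} (cs : CoxeterSystem M W)

theorem length_pow_le (w : W) (m : ℕ) : cs.length (w ^ m) ≤ m * cs.length w := by
  induction m with
  | zero => simp
  | succ m ih =>
    rw [pow_succ, add_one_mul]
    exact (cs.length_mul_le _ _).trans (Nat.add_le_add_right ih _)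

theorem dist_apply_le_length {α : Type*} [PseudoMetricSpace α] (φ : W →* Equiv.Perm α)
    (hφ : ∀ i x, dist (φ (cs.simple i) x) x ≤ 1) (w : W) (x : α) :
    dist (φ w x) x ≤ cs.length w := by
  obtain ⟨ω, hω, rfl⟩ := cs.exists_isReduced w
  rw [hω.eq]
  clear hω
  induction ω with
  | nil => simp
  | cons i ω ih =>
    calc dist (φ (cs.wordProd (i :: ω)) x) x
        ≤ dist (φ (cs.simple i) (φ (cs.wordProd ω) x)) (φ (cs.wordProd ω) x)
          + dist (φ (cs.wordProd ω) x) x := by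
          rw [cs.wordProd_cons, map_mul, Equiv.Perm.mul_apply]
          exact dist_triangle _ _ _
      _ ≤ 1 + ω.length := add_le_add (hφ _ _) ih
      _ = (i :: ω).length := by rw [List.length_cons, Nat.cast_succ, add_comm]

end CoxeterSystem

def affineSwapShift (c : ZMod n) : ℤ := if c = 0 then 1 else if c = 1 then -1 else 0

def affineSwap (i : ZMod n) (x : ℤ) : ℤ := x + affineSwapShift ((x : ZMod n) - i)

theorem affineSwap_apply_of_ne {i : ZMod n} {x : ℤ} (h0 : (x : ZMod n) - i ≠ 0)
    (h1 : (x : ZMod n) - i ≠ 1) : affineSwap i x = x := by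
  simp [affineSwap, affineSwapShift, h0, h1]

theorem dist_affineSwap_le (i : ZMod n) (x : ℤ) : dist (affineSwap i x) x ≤ 1 := by
  rw [Int.dist_eq', affineSwap, add_sub_cancel_left]
  unfold affineSwapShift
  split_ifs <;> norm_num

theorem affineSwap_involutive (h1 : (1 : ZMod n) ≠ 0) (i : ZMod n) :
    Function.Involutive (affineSwap i) := by
  intro x
  simp only [affineSwap, Int.cast_add, add_assoc, add_eq_left]
  generalize (x : ZMod n) = y
  obtain ⟨c, rfl⟩ : ∃ c, y = i + c := ⟨y - i, by ring⟩
  by_cases hc0 : c = 0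
  · subst hc0; norm_num [affineSwapShift, h1]
  by_cases hc1 : c = 1
  · subst hc1; norm_num [affineSwapShift, h1]
  norm_num [affineSwapShift, hc0, hc1]

theorem affineSwap_braid (h1 : (1 : ZMod n) ≠ 0) (h2 : (2 : ZMod n) ≠ 0) (i : ZMod n)
    (x : ℤ) :
    affineSwap i (affineSwap (i + 1) (affineSwap i x)) =
      affineSwap (i + 1) (affineSwap i (affineSwap (i + 1) x)) := by
  have h21 : (2 : ZMod n) ≠ 1 := fun h => h1 (by linear_combination h)
  have hm1 : (-1 : ZMod n) ≠ 1 := fun h => h2 (by linear_combination -h)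
  simp only [affineSwap, Int.cast_add, add_assoc, add_right_inj]
  generalize (x : ZMod n) = y
  obtain ⟨c, rfl⟩ : ∃ c, y = i + c := ⟨y - i, by ring⟩
  -- only residues `c ∈ {0, 1, 2}` of `x - i` are moved by either side
  by_cases hc0 : c = 0
  · subst hc0
    norm_num [affineSwapShift, add_assoc, add_sub_add_left_eq_sub, h1, h2, h21, hm1]
  by_cases hc1 : c = 1
  · subst hc1
    norm_num [affineSwapShift, add_assoc, add_sub_add_left_eq_sub, h1, h2, h21, hm1]
  by_cases hc2 : c = 2
  · subst hc2
    norm_num [affineSwapShift, add_assoc, add_sub_add_left_eq_sub, h1, h2, h21, hm1]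
  have hc1' : c - 1 ≠ 0 := sub_ne_zero.mpr hc1
  have hc2' : c - 1 ≠ 1 := fun h => hc2 (by linear_combination h)
  norm_num [affineSwapShift, add_assoc, add_sub_add_left_eq_sub, hc0, hc1, hc1', hc2']

def affineSwapPerm (h1 : (1 : ZMod n) ≠ 0) (i : ZMod n) : Equiv.Perm ℤ :=
  (affineSwap_involutive h1 i).toPerm

section affineSwapPerm

variable (h1 : (1 : ZMod n) ≠ 0)

theorem affineSwapPerm_apply (i : ZMod n) (x : ℤ) : affineSwapPerm h1 i x = affineSwap i x :=
  rfl

theorem affineSwapPerm_mul_self (i : ZMod n) : affineSwapPerm h1 i * affineSwapPerm h1 i = 1 :=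
  Equiv.ext (affineSwap_involutive h1 i)

theorem affineSwapPerm_braid (h2 : (2 : ZMod n) ≠ 0) {i j : ZMod n} (hj : j = i + 1) :
    affineSwapPerm h1 i * affineSwapPerm h1 j * affineSwapPerm h1 i =
      affineSwapPerm h1 j * affineSwapPerm h1 i * affineSwapPerm h1 j := by
  subst hj
  exact Equiv.ext (affineSwap_braid h1 h2 i)

theorem disjoint_affineSwapPerm {i j : ZMod n} (hij : i ≠ j) (hj : j ≠ i + 1)
    (hi : i ≠ j + 1) : (affineSwapPerm h1 i).Disjoint (affineSwapPerm h1 j) := by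
  intro x
  simp only [affineSwapPerm_apply]
  by_cases hx : (x : ZMod n) - i = 0 ∨ (x : ZMod n) - i = 1
  · right
    rcases hx with hx | hx <;> refine affineSwap_apply_of_ne (fun h => ?_) (fun h => ?_)
    · exact hij (by linear_combination h - hx)
    · exact hi (by linear_combination h - hx)
    · exact hj (by linear_combination hx - h)
    · exact hij (by linear_combination h - hx)
  · rw [not_or] at hx
    exact Or.inl (affineSwap_apply_of_ne hx.1 hx.2)

end affineSwapPerm

theorem ZMod.natCast_ne_zero_of_pos_of_lt {k : ℕ} (hk : 0 < k) (hkn : k < n) :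
    (k : ZMod n) ≠ 0 := by
  rw [Ne, ZMod.natCast_eq_zero_iff]
  exact Nat.not_dvd_of_pos_of_lt hk hkn

theorem Fin.natCast_val_zmod_inj {i j : Fin n} : ((i : ℕ) : ZMod n) = (j : ℕ) ↔ i = j := by
  rw [ZMod.natCast_eq_natCast_iff', Nat.mod_eq_of_lt i.isLt, Nat.mod_eq_of_lt j.isLt, Fin.val_inj]

theorem Fin.val_add_one_mod_eq_iff {i j : Fin n} :
    ((i : ℕ) + 1) % n = j ↔ ((j : ℕ) : ZMod n) = (i : ℕ) + 1 := by
  rw [← Nat.cast_succ, ZMod.natCast_eq_natCast_iff', Nat.mod_eq_of_lt j.isLt, eq_comm]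

theorem isLiftable_affineSwapPerm (h1 : (1 : ZMod n) ≠ 0) (h2 : (2 : ZMod n) ≠ 0) :
    (affineA n).IsLiftable fun i : Fin n => affineSwapPerm h1 (i : ℕ) := by
  intro i j
  change (_ * _) ^ (if i = j then 1
    else if ((i : ℕ) + 1) % n = j ∨ ((j : ℕ) + 1) % n = i then 3 else 2) = 1
  split_ifs with hij hadj
  · rw [hij, pow_one, affineSwapPerm_mul_self]
  · refine mul_pow_three_eq_one_of_braid (affineSwapPerm_mul_self h1 _)
      (affineSwapPerm_mul_self h1 _) ?_
    rw [Fin.val_add_one_mod_eq_iff, Fin.val_add_one_mod_eq_iff] at hadj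
    rcases hadj with hadj | hadj
    · exact affineSwapPerm_braid h1 h2 hadj
    · exact (affineSwapPerm_braid h1 h2 hadj).symm
  · rw [not_or, Fin.val_add_one_mod_eq_iff, Fin.val_add_one_mod_eq_iff] at hadj
    have hcomm :=
      (disjoint_affineSwapPerm h1 (Fin.natCast_val_zmod_inj.not.mpr hij) hadj.1 hadj.2).commute
    rw [hcomm.mul_pow, sq, sq, affineSwapPerm_mul_self, affineSwapPerm_mul_self, one_mul]

noncomputable def affineRepresentation (cs : CoxeterSystem (affineA n) W)
    (h1 : (1 : ZMod n) ≠ 0) (h2 : (2 : ZMod n) ≠ 0) : W →* Equiv.Perm ℤ :=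
  cs.lift ⟨_, isLiftable_affineSwapPerm h1 h2⟩

section affineRepresentation

variable (cs : CoxeterSystem (affineA n) W) (h1 : (1 : ZMod n) ≠ 0) (h2 : (2 : ZMod n) ≠ 0)

theorem affineRepresentation_simple (i : Fin n) :
    affineRepresentation cs h1 h2 (cs.simple i) = affineSwapPerm h1 (i : ℕ) :=
  cs.lift_apply_simple _ i

theorem dist_affineRepresentation_simple_apply_le (i : Fin n) (x : ℤ) :
    dist (affineRepresentation cs h1 h2 (cs.simple i) x) x ≤ 1 := by
  rw [affineRepresentation_simple]
  exact dist_affineSwap_le _ x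

theorem affineRepresentation_wordProd_take_apply {x : ℤ} (hx : (x : ZMod n) = 0) {k : ℕ}
    (hk : k ≤ n) :
    affineRepresentation cs h1 h2 (cs.wordProd ((List.finRange n).take k).reverse) x = x + k := by
  induction k with
  | zero => simp
  | succ k ih =>
    have hlist : ((List.finRange n).take (k + 1)).reverse =
        (⟨k, hk⟩ : Fin n) :: ((List.finRange n).take k).reverse := by
      simp [List.take_add_one, (by omega : k < n)]
    rw [hlist, cs.wordProd_cons, map_mul, Equiv.Perm.mul_apply, ih (by omega),
      affineRepresentation_simple, affineSwapPerm_apply, affineSwap]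
    push_cast
    rw [hx, zero_add, sub_self, affineSwapShift, if_pos rfl]
    ring

theorem affineRepresentation_tauW_apply {x : ℤ} (hx : (x : ZMod n) = 0) :
    affineRepresentation cs h1 h2 (tauW cs) x = x + n := by
  have h := affineRepresentation_wordProd_take_apply cs h1 h2 hx le_rfl
  rwa [List.take_of_length_le (by simp)] at h

theorem affineRepresentation_tauW_pow_apply {x : ℤ} (hx : (x : ZMod n) = 0) (m : ℕ) :
    affineRepresentation cs h1 h2 (tauW cs ^ m) x = x + m * n := by
  induction m with
  | zero => simp
  | succ m ih =>
    rw [pow_succ', map_mul, Equiv.Perm.mul_apply, ih,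
      affineRepresentation_tauW_apply cs h1 h2 (by push_cast; rw [hx, ZMod.natCast_self]; ring)]
    push_cast
    ring

end affineRepresentation

theorem length_tauW_le (cs : CoxeterSystem (affineA n) W) : cs.length (tauW cs) ≤ n := by
  simpa [tauW] using cs.length_wordProd_le (List.finRange n).reverse

/-- `ℓ(κ) = n(n-1)`. -/
theorem stmt5 (hn : 3 ≤ n) (cs : CoxeterSystem (affineA n) W) :
    cs.length (kappaW cs) = n * (n - 1) := by
  have h1 : (1 : ZMod n) ≠ 0 := by
    exact_mod_cast ZMod.natCast_ne_zero_of_pos_of_lt (k := 1) one_pos (by omega)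
  have h2 : (2 : ZMod n) ≠ 0 := by
    exact_mod_cast ZMod.natCast_ne_zero_of_pos_of_lt (k := 2) two_pos (by omega)
  rw [kappaW, mul_comm]
  refine le_antisymm ((cs.length_pow_le _ _).trans (Nat.mul_le_mul_left _ (length_tauW_le cs))) ?_
  have h := cs.dist_apply_le_length _ (dist_affineRepresentation_simple_apply_le cs h1 h2)
    (tauW cs ^ (n - 1)) 0
  rw [affineRepresentation_tauW_pow_apply cs h1 h2 (by simp), Int.dist_eq', zero_add, sub_zero,
    abs_of_nonneg (by positivity)] at h
  exact_mod_cast h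
end

section
/- In the Coxeter group W of affine type Ã_{n−1}, the element κ commutes with each of the simple reflections s_1, …, s_{n−2}: κ·s_i = s_i·κ for all 1 ≤ i ≤ n−2. (This is the key step in proving that the Schubert variety X_{G_0}(κ) is stable under left multiplication by G_0.) -/
variable {n : ℕ} {W : Type*} [Group W]

namespace Stmt8Aux

variable {n : ℕ} {W : Type*} [Group W]

noncomputable def sig (cs : CoxeterSystem (affineA n) W) (h3 : 3 ≤ n) (j : ℕ) : W :=
  cs.simple ⟨j % n, Nat.mod_lt _ (by omega)⟩

noncomputable def DD (cs : CoxeterSystem (affineA n) W) (h3 : 3 ≤ n) : ℕ → W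
  | 0 => 1
  | k + 1 => sig cs h3 k * DD cs h3 k

section

variable (cs : CoxeterSystem (affineA n) W) (h3 : 3 ≤ n)

local prefix:100 "σ" => sig cs h3
local prefix:100 "𝔡" => DD cs h3

theorem M_eq (a b : Fin n) : (affineA n).M a b =
    (if a = b then 1
      else if ((a : ℕ) + 1) % n = (b : ℕ) ∨ ((b : ℕ) + 1) % n = (a : ℕ) then 3 else 2) := rfl

theorem M_adj (hn2 : 2 ≤ n) (a b : Fin n) (hab : ((a : ℕ) + 1) % n = (b : ℕ)) :
    (affineA n).M a b = 3 := by
  have hne : a ≠ b := by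
    intro h
    subst h
    rcases Nat.lt_or_ge ((a : ℕ) + 1) n with hlt | hge
    · rw [Nat.mod_eq_of_lt hlt] at hab; omega
    · have hv := a.isLt
      have he : (a : ℕ) + 1 = n := by omega
      rw [he, Nat.mod_self] at hab
      omega
  rw [M_eq, if_neg hne, if_pos (Or.inl hab)]

theorem M_sep (a b : Fin n) (hne : a ≠ b) (h1 : ((a : ℕ) + 1) % n ≠ (b : ℕ))
    (h2 : ((b : ℕ) + 1) % n ≠ (a : ℕ)) : (affineA n).M a b = 2 := by
  rw [M_eq, if_neg hne, if_neg (by tauto)]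

theorem braid_of {a b : Fin n} (h : (affineA n).M a b = 3) :
    cs.simple a * cs.simple b * cs.simple a = cs.simple b * cs.simple a * cs.simple b := by
  have h1 := cs.simple_mul_simple_pow a b
  rw [h] at h1
  have key : (cs.simple a * cs.simple b * cs.simple a) *
      (cs.simple b * cs.simple a * cs.simple b) = 1 := by
    have e : (cs.simple a * cs.simple b * cs.simple a) *
        (cs.simple b * cs.simple a * cs.simple b) = (cs.simple a * cs.simple b) ^ 3 := by
      rw [pow_succ, pow_succ, pow_one]
      simp only [mul_assoc]
    rw [e, h1]
  have h2 := eq_inv_of_mul_eq_one_left key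
  rw [h2]
  simp [mul_inv_rev, cs.inv_simple, mul_assoc]

theorem comm_of {a b : Fin n} (h : (affineA n).M a b = 2) :
    cs.simple a * cs.simple b = cs.simple b * cs.simple a := by
  have h1 := cs.simple_mul_simple_pow a b
  rw [h] at h1
  have hx : (cs.simple a * cs.simple b) * (cs.simple a * cs.simple b) = 1 := by
    rw [← pow_two]; exact h1
  have h2 := eq_inv_of_mul_eq_one_left hx
  rw [h2]
  simp [mul_inv_rev, cs.inv_simple]

theorem sqσ (j : ℕ) : σ j * σ j = 1 := cs.simple_mul_simple_self _

theorem sq' (j : ℕ) (w : W) : σ j * (σ j * w) = w := by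
  rw [← mul_assoc, sqσ, one_mul]

theorem sig_n : σ n = σ 0 := by
  unfold sig
  congr 1
  exact Fin.ext (by simp [Nat.mod_self])

theorem braidσ (j : ℕ) : σ j * σ (j + 1) * σ j = σ (j + 1) * σ j * σ (j + 1) := by
  apply braid_of
  apply M_adj (by omega)
  show (j % n + 1) % n = (j + 1) % n
  conv_rhs => rw [Nat.add_mod]
  rw [Nat.mod_eq_of_lt (show 1 < n by omega)]

theorem braid' (j : ℕ) (w : W) :
    σ j * (σ (j + 1) * (σ j * w)) = σ (j + 1) * (σ j * (σ (j + 1) * w)) := by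
  calc σ j * (σ (j + 1) * (σ j * w)) = (σ j * σ (j + 1) * σ j) * w := by
        simp only [mul_assoc]
    _ = (σ (j + 1) * σ j * σ (j + 1)) * w := by rw [braidσ]
    _ = σ (j + 1) * (σ j * (σ (j + 1) * w)) := by simp only [mul_assoc]

theorem commσ {i j : ℕ} (hi : i < n) (hj : j < n) (hij : i ≠ j)
    (h1 : (i + 1) % n ≠ j) (h2 : (j + 1) % n ≠ i) : σ i * σ j = σ j * σ i := by
  have hi' : i % n = i := Nat.mod_eq_of_lt hi
  have hj' : j % n = j := Nat.mod_eq_of_lt hj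
  apply comm_of
  apply M_sep
  · simp only [ne_eq, Fin.mk.injEq, hi', hj']
    exact hij
  · show (i % n + 1) % n ≠ j % n
    rw [hi', hj']; exact h1
  · show (j % n + 1) % n ≠ i % n
    rw [hi', hj']; exact h2

theorem comm' {i j : ℕ} (hi : i < n) (hj : j < n) (hij : i ≠ j)
    (h1 : (i + 1) % n ≠ j) (h2 : (j + 1) % n ≠ i) (w : W) :
    σ i * (σ j * w) = σ j * (σ i * w) := by
  rw [← mul_assoc, commσ cs h3 hi hj hij h1 h2, mul_assoc]

theorem DD_succ (k : ℕ) : 𝔡 (k + 1) = σ k * 𝔡 k := rfl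

theorem commD {i : ℕ} (hi2 : 2 ≤ i) (hin : i ≤ n - 2) :
    ∀ k, k ≤ i - 1 → 𝔡 k * σ i = σ i * 𝔡 k := by
  intro k
  induction k with
  | zero =>
    intro _
    show (1 : W) * σ i = σ i * 1
    rw [one_mul, mul_one]
  | succ k ih =>
    intro hk
    have hk' : k ≤ i - 1 := by omega
    show σ k * 𝔡 k * σ i = σ i * (σ k * 𝔡 k)
    rw [mul_assoc, ih hk', ← mul_assoc, ← mul_assoc]
    have hc : σ k * σ i = σ i * σ k := by
      apply commσ cs h3 (by omega) (by omega) (by omega)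
      · rw [Nat.mod_eq_of_lt (by omega)]; omega
      · rw [Nat.mod_eq_of_lt (by omega)]; omega
    rw [hc]

theorem LA {i : ℕ} (hi2 : 2 ≤ i) (hin : i ≤ n - 2) :
    ∀ k, i + 1 ≤ k → k ≤ n → 𝔡 k * σ i = σ (i - 1) * 𝔡 k := by
  intro k hk1
  induction k, hk1 using Nat.le_induction with
  | base =>
    intro _
    obtain ⟨m, rfl⟩ : ∃ m, i = m + 2 := ⟨i - 2, by omega⟩
    have hsub : m + 2 - 1 = m + 1 := by omega
    rw [hsub]
    calc 𝔡 (m + 2 + 1) * σ (m + 2)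
        = σ (m + 2) * (σ (m + 1) * (𝔡 (m + 1) * σ (m + 2))) := by
          simp only [DD_succ, mul_assoc]
      _ = σ (m + 2) * (σ (m + 1) * (σ (m + 2) * 𝔡 (m + 1))) := by
          rw [commD cs h3 hi2 hin (m + 1) (by omega)]
      _ = σ (m + 1) * (σ (m + 2) * (σ (m + 1) * 𝔡 (m + 1))) := by
          rw [← braid' cs h3 (m + 1)]
      _ = σ (m + 1) * 𝔡 (m + 2 + 1) := by
          simp only [DD_succ, mul_assoc]
  | succ k hk ih =>
    intro hk2
    have h1 : 𝔡 k * σ i = σ (i - 1) * 𝔡 k := ih (by omega)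
    have hc : σ k * σ (i - 1) = σ (i - 1) * σ k := by
      apply commσ cs h3 (by omega) (by omega) (by omega)
      · rcases eq_or_ne (k + 1) n with he | hne
        · rw [he, Nat.mod_self]; omega
        · rw [Nat.mod_eq_of_lt (by omega)]; omega
      · rw [show i - 1 + 1 = i by omega, Nat.mod_eq_of_lt (by omega)]; omega
    calc 𝔡 (k + 1) * σ i = σ k * (𝔡 k * σ i) := by rw [DD_succ]; simp only [mul_assoc]
      _ = σ k * σ (i - 1) * 𝔡 k := by rw [h1]; simp only [mul_assoc]
      _ = σ (i - 1) * σ k * 𝔡 k := by rw [hc]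
      _ = σ (i - 1) * 𝔡 (k + 1) := by rw [DD_succ]; simp only [mul_assoc]

theorem Flem : ∀ k, 1 ≤ k → k ≤ n - 2 →
    𝔡 k * σ 0 * σ (n - 1) = σ (n - 1) * (𝔡 k * σ 0) := by
  intro k hk1
  induction k, hk1 using Nat.le_induction with
  | base =>
    intro _
    have h1 : 𝔡 1 * σ 0 = 1 := by
      show σ 0 * (1 : W) * σ 0 = 1
      rw [mul_one, sqσ]
    rw [h1, one_mul, mul_one]
  | succ k hk ih =>
    intro hk2
    have h1 := ih (by omega)
    have hc : σ k * σ (n - 1) = σ (n - 1) * σ k := by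
      apply commσ cs h3 (by omega) (by omega) (by omega)
      · rw [Nat.mod_eq_of_lt (by omega)]; omega
      · rw [show n - 1 + 1 = n by omega, Nat.mod_self]; omega
    calc 𝔡 (k + 1) * σ 0 * σ (n - 1)
        = σ k * (𝔡 k * σ 0 * σ (n - 1)) := by rw [DD_succ]; simp only [mul_assoc]
      _ = σ k * σ (n - 1) * (𝔡 k * σ 0) := by rw [h1]; simp only [mul_assoc]
      _ = σ (n - 1) * σ k * (𝔡 k * σ 0) := by rw [hc]
      _ = σ (n - 1) * (𝔡 (k + 1) * σ 0) := by rw [DD_succ]; simp only [mul_assoc]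

theorem Dn_expand1 : 𝔡 n = σ (n - 1) * 𝔡 (n - 1) := by
  have h : 𝔡 n = 𝔡 (n - 1 + 1) := congrArg (DD cs h3) (by omega)
  rw [h, DD_succ]

theorem Dn_expand2 : 𝔡 n = σ (n - 1) * (σ (n - 2) * 𝔡 (n - 2)) := by
  have h : 𝔡 (n - 1) = 𝔡 (n - 2 + 1) := congrArg (DD cs h3) (by omega)
  rw [Dn_expand1, h, DD_succ]

theorem Dn1_eq : 𝔡 (n - 1) = σ (n - 1) * 𝔡 n := by
  rw [Dn_expand1, ← mul_assoc, sqσ, one_mul]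

theorem LB' : 𝔡 n * σ 0 * σ (n - 1) = σ (n - 2) * (𝔡 n * σ 0) := by
  calc 𝔡 n * σ 0 * σ (n - 1)
      = σ (n - 1) * (σ (n - 2) * (𝔡 (n - 2) * σ 0 * σ (n - 1))) := by
        rw [Dn_expand2]; simp only [mul_assoc]
    _ = σ (n - 1) * (σ (n - 2) * (σ (n - 1) * (𝔡 (n - 2) * σ 0))) := by
        rw [Flem cs h3 (n - 2) (by omega) (by omega)]
    _ = σ (n - 1) * σ (n - 2) * σ (n - 1) * (𝔡 (n - 2) * σ 0) := by
        simp only [mul_assoc]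
    _ = σ (n - 2) * σ (n - 1) * σ (n - 2) * (𝔡 (n - 2) * σ 0) := by
        have hb := braidσ cs h3 (n - 2)
        rw [show n - 2 + 1 = n - 1 by omega] at hb
        rw [← hb]
    _ = σ (n - 2) * (𝔡 n * σ 0) := by
        rw [Dn_expand2]; simp only [mul_assoc]

theorem GG : ∀ k, 2 ≤ k → k ≤ n - 1 → 𝔡 k * σ 1 = σ 0 * 𝔡 k := by
  intro k hk1
  induction k, hk1 using Nat.le_induction with
  | base =>
    intro _
    have h2 : 𝔡 2 = σ 1 * σ 0 := by
      show σ 1 * (σ 0 * (1 : W)) = σ 1 * σ 0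
      rw [mul_one]
    rw [h2]
    have hb := braidσ cs h3 0
    calc σ 1 * σ 0 * σ 1 = σ 0 * σ 1 * σ 0 := by
          have := (braidσ cs h3 0).symm
          simpa using this
      _ = σ 0 * (σ 1 * σ 0) := by simp only [mul_assoc]
  | succ k hk ih =>
    intro hk2
    have h1 := ih (by omega)
    have hc : σ k * σ 0 = σ 0 * σ k := by
      apply commσ cs h3 (by omega) (by omega) (by omega)
      · rw [Nat.mod_eq_of_lt (by omega)]; omega
      · rw [Nat.mod_eq_of_lt (by omega)]; omega
    calc 𝔡 (k + 1) * σ 1 = σ k * (𝔡 k * σ 1) := by rw [DD_succ]; simp only [mul_assoc]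
      _ = σ k * σ 0 * 𝔡 k := by rw [h1]; simp only [mul_assoc]
      _ = σ 0 * σ k * 𝔡 k := by rw [hc]
      _ = σ 0 * 𝔡 (k + 1) := by rw [DD_succ]; simp only [mul_assoc]

theorem tau_s1 : 𝔡 n * σ 1 = σ (n - 1) * (σ 0 * 𝔡 (n - 1)) := by
  rw [Dn_expand1, mul_assoc, GG cs h3 (n - 1) (by omega) (by omega)]

theorem LBlem : 𝔡 n * (𝔡 n * σ 1) = σ (n - 2) * (𝔡 n * 𝔡 n) := by
  have hb : σ (n - 1) * (σ 0 * (σ (n - 1) * 𝔡 n)) = σ 0 * (σ (n - 1) * (σ 0 * 𝔡 n)) := by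
    have := braid' cs h3 (n - 1) (𝔡 n)
    rw [show n - 1 + 1 = n by omega, sig_n cs h3] at this
    exact this
  calc 𝔡 n * (𝔡 n * σ 1)
      = 𝔡 n * (σ (n - 1) * (σ 0 * 𝔡 (n - 1))) := by rw [tau_s1]
    _ = 𝔡 n * (σ (n - 1) * (σ 0 * (σ (n - 1) * 𝔡 n))) := by rw [← Dn1_eq]
    _ = 𝔡 n * (σ 0 * (σ (n - 1) * (σ 0 * 𝔡 n))) := by rw [hb]
    _ = 𝔡 n * σ 0 * σ (n - 1) * (σ 0 * 𝔡 n) := by simp only [mul_assoc]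
    _ = σ (n - 2) * (𝔡 n * σ 0) * (σ 0 * 𝔡 n) := by rw [LB']
    _ = σ (n - 2) * (𝔡 n * (σ 0 * (σ 0 * 𝔡 n))) := by simp only [mul_assoc]
    _ = σ (n - 2) * (𝔡 n * 𝔡 n) := by rw [sq']

theorem C2 : ∀ k, 2 ≤ k → k ≤ n - 1 → 𝔡 n ^ k * σ 1 = σ (n - k) * 𝔡 n ^ k := by
  intro k hk1
  induction k, hk1 using Nat.le_induction with
  | base =>
    intro _
    rw [pow_two, mul_assoc, LBlem cs h3]
  | succ k hk ih =>
    intro hk2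
    have h1 := ih (by omega)
    have hLA := LA cs h3 (show 2 ≤ n - k by omega) (show n - k ≤ n - 2 by omega)
      n (by omega) (le_refl n)
    calc 𝔡 n ^ (k + 1) * σ 1 = 𝔡 n * (𝔡 n ^ k * σ 1) := by
          rw [pow_succ']; simp only [mul_assoc]
      _ = 𝔡 n * σ (n - k) * 𝔡 n ^ k := by rw [h1]; simp only [mul_assoc]
      _ = σ (n - k - 1) * 𝔡 n * 𝔡 n ^ k := by rw [hLA]
      _ = σ (n - (k + 1)) * 𝔡 n ^ (k + 1) := by
          rw [Nat.sub_sub, pow_succ']; simp only [mul_assoc]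

theorem C1 {i : ℕ} (h1 : 1 ≤ i) (h2 : i ≤ n - 2) :
    ∀ m, m ≤ i - 1 → 𝔡 n ^ m * σ i = σ (i - m) * 𝔡 n ^ m := by
  intro m
  induction m with
  | zero =>
    intro _
    rw [pow_zero, one_mul, mul_one, Nat.sub_zero]
  | succ m ih =>
    intro hm
    have hih := ih (by omega)
    have hLA := LA cs h3 (show 2 ≤ i - m by omega) (show i - m ≤ n - 2 by omega)
      n (by omega) (le_refl n)
    calc 𝔡 n ^ (m + 1) * σ i = 𝔡 n * (𝔡 n ^ m * σ i) := by
          rw [pow_succ']; simp only [mul_assoc]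
      _ = 𝔡 n * σ (i - m) * 𝔡 n ^ m := by rw [hih]; simp only [mul_assoc]
      _ = σ (i - m - 1) * 𝔡 n * 𝔡 n ^ m := by rw [hLA]
      _ = σ (i - (m + 1)) * 𝔡 n ^ (m + 1) := by
          rw [Nat.sub_sub, pow_succ']; simp only [mul_assoc]

theorem tau_eq : tauW cs = 𝔡 n := by
  have key : ∀ k, k ≤ n → cs.wordProd ((List.finRange n).take k).reverse = 𝔡 k := by
    intro k
    induction k with
    | zero =>
      intro _
      simp [CoxeterSystem.wordProd_nil]
      rfl
    | succ k ih =>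
      intro hk
      have hkn : k < n := hk
      have hk' : k < (List.finRange n).length := by
        rw [List.length_finRange]; exact hkn
      rw [List.take_succ, List.getElem?_eq_getElem hk', List.getElem_finRange]
      rw [Option.toList_some, List.reverse_append, List.reverse_singleton,
        List.singleton_append, CoxeterSystem.wordProd_cons, ih (by omega), DD_succ]
      congr 1
      unfold sig
      congr 1
      exact Fin.ext (by simp [Nat.mod_eq_of_lt hkn])
  have h := key n (le_refl n)
  rw [List.take_of_length_le (by rw [List.length_finRange])] at h
  exact h

theorem kappa_comm {i : ℕ} (h1 : 1 ≤ i) (h2 : i ≤ n - 2) :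
    𝔡 n ^ (n - 1) * σ i = σ i * 𝔡 n ^ (n - 1) := by
  have hsplit : (n - i) + (i - 1) = n - 1 := by omega
  calc 𝔡 n ^ (n - 1) * σ i
      = 𝔡 n ^ (n - i) * (𝔡 n ^ (i - 1) * σ i) := by
        rw [← mul_assoc, ← pow_add, hsplit]
    _ = 𝔡 n ^ (n - i) * (σ (i - (i - 1)) * 𝔡 n ^ (i - 1)) := by
        rw [C1 cs h3 h1 h2 (i - 1) (le_refl _)]
    _ = 𝔡 n ^ (n - i) * σ 1 * 𝔡 n ^ (i - 1) := by
        rw [show i - (i - 1) = 1 by omega]; simp only [mul_assoc]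
    _ = σ (n - (n - i)) * 𝔡 n ^ (n - i) * 𝔡 n ^ (i - 1) := by
        rw [C2 cs h3 (n - i) (by omega) (by omega)]
    _ = σ i * 𝔡 n ^ (n - 1) := by
        rw [show n - (n - i) = i by omega, mul_assoc, ← pow_add, hsplit]

end

end Stmt8Aux

/-- `κ·s_i = s_i·κ` for every `1 ≤ i ≤ n-2`. -/
theorem stmt8 (hn : 3 ≤ n) (cs : CoxeterSystem (affineA n) W) :
    ∀ i : Fin n, 1 ≤ (i : ℕ) → (i : ℕ) ≤ n - 2 →
      kappaW cs * cs.simple i = cs.simple i * kappaW cs := by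
  intro i h1 h2
  have hs : cs.simple i = Stmt8Aux.sig cs hn (i : ℕ) := by
    unfold Stmt8Aux.sig
    congr 1
    exact Fin.ext (by simp [Nat.mod_eq_of_lt i.isLt])
  have hk : kappaW cs = Stmt8Aux.DD cs hn n ^ (n - 1) := by
    unfold kappaW
    rw [Stmt8Aux.tau_eq cs hn]
  rw [hs, hk]
  exact Stmt8Aux.kappa_comm cs hn h1 h2
end

section
/- For the action of τ on the affine root lattice V of type Ã_{n−1}: τ(δ) = δ, and τ(α_1 + α_2 + ⋯ + α_{n−1}) = 2δ + α_{n−1}. -/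
/-! Statement 10: for the action of `τ` on the affine root lattice of type `Ã_{n-1}`:
`τ(δ) = δ` and `τ(α_1 + ⋯ + α_{n-1}) = 2δ + α_{n-1}`. -/

/-- The affine root lattice `V = ℤ × (Fin n → ℤ)` of type `Ã_{n-1}`; the first
coordinate records the coefficient of the basic imaginary root `δ`. -/
abbrev V (n : ℕ) : Type := ℤ × (Fin n → ℤ)

/-- The basic imaginary root `δ = (1, 0)`. -/
def deltaV (n : ℕ) : V n := (1, 0)

/-- The index preceding `i` cyclically (i.e. `i - 1 mod n`). -/
def prevIdx {n : ℕ} (i : Fin n) : Fin n := ⟨((i : ℕ) + (n - 1)) % n, Nat.mod_lt _ i.pos⟩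

/-- The simple roots, indexed `0`-based by `Fin n`: writing `f_0, …, f_{n-1}` for the
standard basis of `Fin n → ℤ` (so `e_k = f_{k-1}` in the paper's `1`-based notation),
`alphaV i = α_i = (0, e_i − e_{i+1}) = (0, f_{i-1} − f_i)` for `1 ≤ i ≤ n-1`, and
`alphaV 0 = α_0 = (1, e_n − e_1) = (1, f_{n-1} − f_0)`. -/
def alphaV {n : ℕ} (i : Fin n) : V n :=
  (if (i : ℕ) = 0 then 1 else 0, Pi.single (prevIdx i) 1 - Pi.single i 1)

/-- The pairing of `x ∈ V` with the coroot `α_i^∨`: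
`⟨(r,v), α_i^∨⟩ = v_i − v_{i+1}` for `1 ≤ i ≤ n-1` and `⟨(r,v), α_0^∨⟩ = v_n − v_1`
(in the paper's `1`-based notation). -/
def coroot {n : ℕ} (i : Fin n) (x : V n) : ℤ := x.2 (prevIdx i) - x.2 i

/-- The reflection `s_i : V → V`, `s_i(x) = x − ⟨x, α_i^∨⟩·α_i`. -/
def sV {n : ℕ} (i : Fin n) (x : V n) : V n := x - coroot i x • alphaV i

/-- `τ = s_{n-1}∘s_{n-2}∘⋯∘s_1∘s_0` acting on `V` (the `foldl` applies `s_0` first). -/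
def tauV (n : ℕ) : V n → V n := fun x => (List.finRange n).foldl (fun y i => sV i y) x

/-- `κ = τ^{n-1}` acting on `V`. -/
def kappaV (n : ℕ) : V n → V n := (tauV n)^[n - 1]

/-!
For `i ≠ 0` the reflection `s_i` fixes the `δ`-coordinate and transposes the coordinates
`i - 1` and `i` of the second factor; `s_0` transposes the coordinates `n - 1` and `0` and also
shifts the `δ`-coordinate. In particular every `s_i` fixes `δ`.
The sum `α_1 + ⋯ + α_{n-1}` telescopes to `f_0 - f_{n-1}`. Then `s_0` sends it to
`2δ + f_{n-1} - f_0`, the transpositions `s_1, …, s_{n-2}` move `f_0` along to `f_{n-2}`, and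
`s_{n-1}` exchanges `f_{n-2}` and `f_{n-1}`, which leaves `2δ + f_{n-2} - f_{n-1} = 2δ + α_{n-1}`.
-/

theorem Fin.sum_univ_castSucc_sub_succ {M : Type*} [AddCommGroup M] {n : ℕ}
    (f : Fin (n + 1) → M) :
    ∑ j : Fin n, (f j.castSucc - f j.succ) = f 0 - f (Fin.last n) := by
  induction n with
  | zero => simp
  | succ n ih =>
    have := ih (f ∘ Fin.castSucc)
    simp only [Function.comp_apply, ← Fin.succ_castSucc, Fin.castSucc_zero] at this
    rw [Fin.sum_univ_castSucc, this, Fin.succ_last]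
    abel

theorem Fin.foldl_eq_of_step {α : Type*} {n : ℕ} (f : α → Fin n → α) (A : Fin (n + 1) → α)
    (h : ∀ i : Fin n, f (A i.castSucc) i = A i.succ) :
    Fin.foldl n f (A 0) = A (Fin.last n) := by
  induction n with
  | zero => simp
  | succ n ih =>
    have := ih (fun x i => f x i.castSucc) (A ∘ Fin.castSucc) fun i => h i.castSucc
    simp only [Function.comp_apply, Fin.castSucc_zero] at this
    rw [Fin.foldl_succ_last, this]
    exact h (Fin.last n)

section
variable {n : ℕ}

lemma prevIdx_zero : prevIdx (0 : Fin (n + 1)) = Fin.last n := by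
  ext; simp [prevIdx]

lemma prevIdx_succ (j : Fin n) : prevIdx j.succ = j.castSucc := by
  ext
  simp only [prevIdx, Fin.val_succ, Fin.val_castSucc, add_tsub_cancel_right]
  rw [add_right_comm, add_assoc, Nat.add_mod_right, Nat.mod_eq_of_lt (by omega)]

lemma sV_deltaV (i : Fin n) : sV i (deltaV n) = deltaV n := by
  simp [sV, coroot, deltaV]

lemma tauV_deltaV : tauV n (deltaV n) = deltaV n :=
  List.foldl_fixed' sV_deltaV _

lemma snd_sV (i : Fin n) (x : V n) : (sV i x).2 = x.2 ∘ Equiv.swap (prevIdx i) i := by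
  funext k
  simp only [sV, coroot, alphaV, Prod.snd_sub, Prod.smul_snd, Pi.sub_apply, Pi.smul_apply,
    Pi.single_apply, Function.comp_apply, Equiv.swap_apply_def, smul_eq_mul]
  split_ifs <;> subst_vars <;> ring

/-- `r δ + f_a - f_b`. -/
def rootV (r : ℤ) (a b : Fin n) : V n := (r, Pi.single a 1 - Pi.single b 1)

lemma smul_deltaV_add_rootV (r s : ℤ) (a b : Fin n) :
    r • deltaV n + rootV s a b = rootV (r + s) a b := by
  ext : 1 <;> simp [deltaV, rootV]

lemma alphaV_succ (j : Fin n) : alphaV j.succ = rootV 0 j.castSucc j.succ := by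
  simp [alphaV, rootV, prevIdx_succ]

lemma sum_alphaV_succ : ∑ j : Fin n, alphaV j.succ = rootV 0 0 (Fin.last n) := by
  ext : 1
  · simp [alphaV_succ, rootV, Prod.fst_sum]
  · simp only [alphaV_succ, rootV, Prod.snd_sum]
    exact Fin.sum_univ_castSucc_sub_succ fun k => Pi.single k 1

lemma sum_filter_one_le_alphaV :
    ∑ i ∈ Finset.univ.filter (fun i : Fin (n + 1) => 1 ≤ (i : ℕ)), alphaV i =
      rootV 0 0 (Fin.last n) := by
  rw [Finset.sum_filter, Fin.sum_univ_succ, ← sum_alphaV_succ]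
  simp

lemma sV_rootV (i : Fin n) (r : ℤ) (a b : Fin n) :
    sV i (rootV r a b) = rootV (r - if (i : ℕ) = 0 then coroot i (rootV r a b) else 0)
      (Equiv.swap (prevIdx i) i a) (Equiv.swap (prevIdx i) i b) := by
  ext k : 2
  · simp [sV, alphaV, rootV]
  · rw [snd_sV]
    simp [rootV, Pi.single_apply, Equiv.swap_apply_eq_iff]

lemma sV_succ_rootV (j : Fin n) (r : ℤ) (a b : Fin (n + 1)) :
    sV j.succ (rootV r a b) =
      rootV r (Equiv.swap j.castSucc j.succ a) (Equiv.swap j.castSucc j.succ b) := by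
  simp [sV_rootV, prevIdx_succ]

lemma sV_zero_rootV_zero_last (r : ℤ) :
    sV 0 (rootV r 0 (Fin.last (n + 1))) = rootV (r + 2) (Fin.last (n + 1)) 0 := by
  rw [sV_rootV]
  simp [prevIdx_zero, coroot, rootV]

lemma tauV_rootV_zero_last (r : ℤ) :
    tauV (n + 3) (rootV r 0 (Fin.last (n + 2))) =
      rootV (r + 2) (Fin.last (n + 1)).castSucc (Fin.last (n + 2)) := by
  have middle : Fin.foldl (n + 1) (fun y i => sV i.castSucc.succ y)
      (rootV (r + 2) (Fin.last (n + 2)) 0) =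
      rootV (r + 2) (Fin.last (n + 2)) (Fin.last (n + 1)).castSucc := by
    have := Fin.foldl_eq_of_step (fun y (i : Fin (n + 1)) => sV i.castSucc.succ y)
      (fun k => rootV (r + 2) (Fin.last (n + 2)) k.castSucc) fun i => by
        rw [sV_succ_rootV, Fin.succ_castSucc, Equiv.swap_apply_left,
          Equiv.swap_apply_of_ne_of_ne (Fin.castSucc_lt_last _).ne' (Fin.castSucc_lt_last _).ne']
    simpa using this
  rw [tauV, ← Fin.foldl_eq_foldl_finRange, Fin.foldl_succ, Fin.foldl_succ_last,
    sV_zero_rootV_zero_last, middle, sV_succ_rootV, Fin.succ_last, Equiv.swap_apply_right,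
    Equiv.swap_apply_left]

end

/-- `τ(δ) = δ` and `τ(α_1 + α_2 + ⋯ + α_{n-1}) = 2δ + α_{n-1}`. -/
theorem stmt10 {n : ℕ} (hn : 3 ≤ n) :
    tauV n (deltaV n) = deltaV n ∧
      tauV n (∑ i ∈ Finset.univ.filter (fun i : Fin n => 1 ≤ (i : ℕ)), alphaV i)
        = (2 : ℤ) • deltaV n + alphaV (⟨n - 1, by omega⟩ : Fin n) := by
  obtain ⟨m, rfl⟩ := Nat.exists_eq_add_of_le' hn
  have last_eq : (⟨m + 3 - 1, by omega⟩ : Fin (m + 3)) = (Fin.last (m + 1)).succ := by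
    ext; simp
  rw [sum_filter_one_le_alphaV, tauV_rootV_zero_last, last_eq, alphaV_succ,
    smul_deltaV_add_rootV]
  exact ⟨tauV_deltaV, by simp⟩
end

section
/- For the action of τ on the affine root lattice V of type Ã_{n−1}: for every integer r ≥ 0 and every 2 ≤ i ≤ n−1, τ(rδ + α_i + α_{i+1} + ⋯ + α_{n−1}) = (r+1)δ + α_{i−1} + α_i + ⋯ + α_{n−1}. -/
section

variable {n : ℕ}

lemma val_prevIdx_of_ne_zero {k : Fin n} (hk : (k : ℕ) ≠ 0) : (prevIdx k : ℕ) = k - 1 := by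
  have : (k : ℕ) + (n - 1) = (k - 1) + n := by omega
  simp only [prevIdx, this, Nat.add_mod_right]
  exact Nat.mod_eq_of_lt (by omega)

lemma val_prevIdx_of_eq_zero {k : Fin n} (hk : (k : ℕ) = 0) : (prevIdx k : ℕ) = n - 1 := by
  simp only [prevIdx, hk, Nat.zero_add]
  exact Nat.mod_eq_of_lt (by omega)

lemma sV_eq_comp_swap (k : Fin n) (x : V n) :
    sV k x = (x.1 - if (k : ℕ) = 0 then coroot k x else 0, x.2 ∘ Equiv.swap (prevIdx k) k) := by
  refine Prod.ext ?_ (funext fun m => ?_)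
  · by_cases hk : (k : ℕ) = 0 <;> simp [sV, alphaV, hk]
  · by_cases hpk : prevIdx k = k
    · simp [sV, coroot, hpk]
    · simp only [sV, coroot, alphaV, Prod.snd_sub, Prod.smul_snd, Pi.sub_apply, Pi.smul_apply,
        Pi.single_apply, Function.comp_apply, Equiv.swap_apply_def, smul_eq_mul]
      split_ifs <;> simp_all [eq_comm]

lemma single_sub_single_comp_equiv {ι α : Type*} [DecidableEq ι] [AddGroup α] (σ : ι ≃ ι)
    (a b : ι) (c : α) :
    (Pi.single a c - Pi.single b c : ι → α) ∘ σ
      = Pi.single (σ.symm a) c - Pi.single (σ.symm b) c := by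
  rw [Pi.sub_comp, Pi.single_comp_equiv, Pi.single_comp_equiv]

lemma alphaV_of_ne_zero {k : Fin n} (hk : (k : ℕ) ≠ 0) :
    alphaV k = (0, Pi.single (prevIdx k) 1 - Pi.single k 1) := by
  simp [alphaV, hk]

lemma sum_alphaV_filter_le {j : ℕ} (hj : j ≤ n) (hj1 : 1 ≤ j) (a b : Fin n)
    (ha : (a : ℕ) = j - 1) (hb : (b : ℕ) = n - 1) :
    ∑ k ∈ Finset.univ.filter (fun k : Fin n => j ≤ (k : ℕ)), alphaV k
      = (0, Pi.single a 1 - Pi.single b 1) := by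
  induction hj using Nat.decreasingInduction generalizing a with
  | self =>
    have hab : a = b := Fin.ext (by omega)
    have hempty : Finset.univ.filter (fun k : Fin n => n ≤ (k : ℕ)) = ∅ := by
      ext k; simp [k.isLt]
    rw [hempty, Finset.sum_empty, hab, sub_self]
    rfl
  | of_succ j hj ih =>
    have hsplit : Finset.univ.filter (fun k : Fin n => j ≤ (k : ℕ))
        = insert ⟨j, hj⟩ (Finset.univ.filter (fun k : Fin n => j + 1 ≤ (k : ℕ))) := by
      ext k
      simp only [Finset.mem_filter, Finset.mem_univ, true_and, Finset.mem_insert, Fin.ext_iff]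
      omega
    have hj0 : ((⟨j, hj⟩ : Fin n) : ℕ) ≠ 0 := by change j ≠ 0; omega
    have hprev : prevIdx (⟨j, hj⟩ : Fin n) = a :=
      Fin.ext (by rw [val_prevIdx_of_ne_zero hj0, ha])
    rw [hsplit, Finset.sum_insert (by simp), ih (by omega) ⟨j, hj⟩ rfl, alphaV_of_ne_zero hj0,
      hprev]
    ext <;> simp

def tauPrefix (n j : ℕ) (x : V n) : V n :=
  ((List.finRange n).take j).foldl (fun y i => sV i y) x

lemma tauPrefix_self (x : V n) : tauPrefix n n x = tauV n x := by
  simp [tauPrefix, tauV, List.take_of_length_le]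

lemma tauPrefix_succ (x : V n) {j : ℕ} (hj : j < n) :
    tauPrefix n (j + 1) x = sV ⟨j, hj⟩ (tauPrefix n j x) := by
  rw [tauPrefix, tauPrefix, ← List.take_concat_get (by simpa using hj), List.concat_eq_append,
    List.foldl_append, List.getElem_finRange]
  rfl

lemma sV_single_sub_single_of_ne_zero {k : Fin n} (hk : (k : ℕ) ≠ 0) (s : ℤ) (a b : Fin n) :
    sV k (s, Pi.single a 1 - Pi.single b 1)
      = (s, Pi.single (Equiv.swap (prevIdx k) k a) 1
          - Pi.single (Equiv.swap (prevIdx k) k b) 1) := by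
  rw [sV_eq_comp_swap, if_neg hk, sub_zero, single_sub_single_comp_equiv, Equiv.symm_swap]

lemma sV_zero_single_sub_single {z : Fin n} (hz : (z : ℕ) = 0) (s : ℤ) {a b : Fin n}
    (ha0 : (a : ℕ) ≠ 0) (ha : (a : ℕ) ≠ n - 1) (hb : (b : ℕ) = n - 1) :
    sV z (s, Pi.single a 1 - Pi.single b 1) = (s + 1, Pi.single a 1 - Pi.single z 1) := by
  have hprev : prevIdx z = b := Fin.ext (by rw [val_prevIdx_of_eq_zero hz, hb])
  have hzb : z ≠ b := fun h => by simp_all [Fin.ext_iff]; omega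
  have haz : a ≠ z := fun h => ha0 (by rw [h, hz])
  have hab : a ≠ b := fun h => ha (by rw [h, hb])
  rw [sV_eq_comp_swap, if_pos hz, single_sub_single_comp_equiv, Equiv.symm_swap, hprev,
    Equiv.swap_apply_of_ne_of_ne hab haz, Equiv.swap_apply_left]
  simp [coroot, hprev, hab.symm, hzb, haz.symm]

lemma tauPrefix_succ_single_sub_single (r : ℤ) {c : ℕ} (hc : 1 ≤ c) (hcn : c + 1 < n)
    (a₀ b₀ : Fin n) (ha₀ : (a₀ : ℕ) = c) (hb₀ : (b₀ : ℕ) = n - 1) {j : ℕ} (hj : j < n)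
    (a b : Fin n) (ha : (a : ℕ) = if j < c then c else c - 1) (hb : (b : ℕ) = j) :
    tauPrefix n (j + 1) (r, Pi.single a₀ 1 - Pi.single b₀ 1)
      = (r + 1, Pi.single a 1 - Pi.single b 1) := by
  induction j generalizing a b with
  | zero =>
    obtain rfl : a = a₀ := Fin.ext (by simp_all)
    obtain rfl : b = ⟨0, hj⟩ := Fin.ext hb
    rw [tauPrefix_succ _ hj]
    exact sV_zero_single_sub_single rfl r (by omega) (by omega) hb₀
  | succ j ih =>
    let k : Fin n := ⟨j + 1, hj⟩
    let a' : Fin n := ⟨if j < c then c else c - 1, by split <;> omega⟩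
    have hk : (k : ℕ) ≠ 0 := by simp [k]
    have hprev : prevIdx k = ⟨j, by omega⟩ := Fin.ext (val_prevIdx_of_ne_zero hk)
    have hb' : Equiv.swap (prevIdx k) k ⟨j, by omega⟩ = b := by
      rw [hprev, Equiv.swap_apply_left]; exact Fin.ext hb.symm
    -- `a'` moves only when `b` crosses it, at `j + 1 = c`
    have ha' : Equiv.swap (prevIdx k) k a' = a := by
      rw [hprev, Equiv.swap_apply_def]
      split_ifs <;> simp_all only [Fin.ext_iff, a', k] <;> split_ifs at * <;> omega
    rw [tauPrefix_succ _ hj, ih (by omega) a' ⟨j, by omega⟩ rfl rfl,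
      sV_single_sub_single_of_ne_zero hk, ha', hb']

lemma smul_deltaV_add_zero_prod (s : ℤ) (v : Fin n → ℤ) : s • deltaV n + (0, v) = (s, v) := by
  ext <;> simp [deltaV]

end

theorem stmt11_general {n : ℕ} (r : ℤ)
    (i : ℕ) (hi1 : 2 ≤ i) (hi2 : i ≤ n - 1) :
    tauV n (r • deltaV n + ∑ k ∈ Finset.univ.filter (fun k : Fin n => i ≤ (k : ℕ)), alphaV k)
      = (r + 1) • deltaV n
        + ∑ k ∈ Finset.univ.filter (fun k : Fin n => i - 1 ≤ (k : ℕ)), alphaV k := by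
  let a₀ : Fin n := ⟨i - 1, by omega⟩
  let a : Fin n := ⟨i - 2, by omega⟩
  let b : Fin n := ⟨n - 1, by omega⟩
  rw [sum_alphaV_filter_le (by omega) (by omega) a₀ b rfl rfl,
    sum_alphaV_filter_le (by omega) (by omega) a b (by change i - 2 = i - 1 - 1; omega) rfl,
    smul_deltaV_add_zero_prod, smul_deltaV_add_zero_prod, ← tauPrefix_self]
  convert tauPrefix_succ_single_sub_single r (c := i - 1) (by omega) (by omega) a₀ b rfl rfl
    (j := n - 1) (by omega) a b (by simp only [a]; split <;> omega) rfl using 2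
  omega

/-- For `r ≥ 0` and `2 ≤ i ≤ n-1`,
`τ(rδ + α_i + ⋯ + α_{n-1}) = (r+1)δ + α_{i-1} + α_i + ⋯ + α_{n-1}`. -/
theorem stmt11 {n : ℕ} (hn : 3 ≤ n) (r : ℤ) (hr : 0 ≤ r)
    (i : ℕ) (hi1 : 2 ≤ i) (hi2 : i ≤ n - 1) :
    tauV n (r • deltaV n + ∑ k ∈ Finset.univ.filter (fun k : Fin n => i ≤ (k : ℕ)), alphaV k)
      = (r + 1) • deltaV n
        + ∑ k ∈ Finset.univ.filter (fun k : Fin n => i - 1 ≤ (k : ℕ)), alphaV k :=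
  stmt11_general r i hi1 hi2
end

section
/- For the action of τ on the affine root lattice V of type Ã_{n−1}: for every 1 ≤ i ≤ n−2, τ^i(α_{n−1}) = iδ + α_{n−i−1} + α_{n−i} + ⋯ + α_{n−1}. In particular each τ^i(α_{n−1}), 1 ≤ i ≤ n−2, is a positive real affine root. -/
/-- A positive real affine root: an element of `V` of the form `(r, e_i − e_j)` with
`i ≠ j` and `r > 0`, or `(0, e_i − e_j)` with `i < j`. -/
def IsPosRealRoot {n : ℕ} (x : V n) : Prop :=
  ∃ i j : Fin n, x.2 = Pi.single i 1 - Pi.single j 1 ∧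
    ((i ≠ j ∧ 0 < x.1) ∨ (i < j ∧ x.1 = 0))


/-! Each `s_i` with `i ≠ 0` acts on the finite part `v` by transposing the coordinates `i - 1`
and `i`, while `s_0` transposes `n - 1` and `0` and adds `v_0 - v_{n-1}` to the coefficient of `δ`
(indices `0`-based, as in `alphaV`). Pushing `rδ + f_a - f_{n-1}` with `1 ≤ a ≤ n - 2` through
`s_0, s_1, …, s_{n-1}`, the step `s_0` raises the `δ`-coefficient by one and moves `-f_{n-1}` to
slot `0`; the remaining transpositions carry it back to slot `n - 1` and on the way shift `f_a` to
`f_{a-1}`. So `τ(rδ + f_a - f_{n-1}) = (r + 1)δ + f_{a-1} - f_{n-1}`, and iterating from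
`α_{n-1} = f_{n-2} - f_{n-1}` gives `iδ + f_{n-2-i} - f_{n-1}`, which is also what the sum
`α_{n-i-1} + ⋯ + α_{n-1}` telescopes to. -/

theorem List.foldl_take_add_one {α β : Type*} (f : β → α → β) (x : β) (l : List α) {m : ℕ}
    (hm : m < l.length) : (l.take (m + 1)).foldl f x = f ((l.take m).foldl f x) l[m] := by
  rw [List.take_add_one, List.foldl_append, List.getElem?_eq_getElem hm]
  rfl

variable {n : ℕ}

def finRoot (a b : Fin n) : Fin n → ℤ := Pi.single a 1 - Pi.single b 1

theorem finRoot_add_finRoot (a b c : Fin n) : finRoot a b + finRoot b c = finRoot a c := by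
  simp only [finRoot]
  abel

theorem finRoot_comp_swap (a b p q : Fin n) :
    finRoot a b ∘ Equiv.swap p q = finRoot (Equiv.swap p q a) (Equiv.swap p q b) := by
  simp only [finRoot, Pi.sub_comp, Pi.single_comp_equiv, Equiv.symm_swap]

theorem isPosRealRoot_of_lt {a b : Fin n} (hab : a < b) {r : ℤ} (hr : 0 ≤ r) :
    IsPosRealRoot ((r, finRoot a b) : V n) := by
  refine ⟨a, b, rfl, ?_⟩
  rcases hr.lt_or_eq with hr | hr
  · exact Or.inl ⟨hab.ne, hr⟩
  · exact Or.inr ⟨hab, hr.symm⟩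

theorem prevIdx_val_of_ne_zero {i : Fin n} (hi : (i : ℕ) ≠ 0) : (prevIdx i : ℕ) = i - 1 := by
  have := i.isLt
  rw [prevIdx, Fin.val_mk, show (i : ℕ) + (n - 1) = n + (i - 1) by omega, Nat.add_mod_left,
    Nat.mod_eq_of_lt (by omega)]

theorem prevIdx_val_of_eq_zero {i : Fin n} (hi : (i : ℕ) = 0) : (prevIdx i : ℕ) = n - 1 := by
  have := i.isLt
  rw [prevIdx, Fin.val_mk, hi, zero_add, Nat.mod_eq_of_lt (by omega)]

theorem prevIdx_iterate_val (b : Fin n) {k : ℕ} (hk : k ≤ b) : (prevIdx^[k] b : ℕ) = b - k := by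
  induction k with
  | zero => rfl
  | succ k ih =>
    rw [Function.iterate_succ_apply', prevIdx_val_of_ne_zero (by omega), ih (by omega)]
    omega

theorem alphaV_of_ne_zero_s15 {i : Fin n} (hi : (i : ℕ) ≠ 0) :
    alphaV i = (0, finRoot (prevIdx i) i) := by
  simp [alphaV, hi, finRoot]

theorem sV_apply (i : Fin n) (x : V n) :
    sV i x = (x.1 - if (i : ℕ) = 0 then coroot i x else 0, x.2 ∘ Equiv.swap (prevIdx i) i) := by
  refine Prod.ext (by simp [sV, alphaV]) (funext fun j => ?_)
  simp only [sV, alphaV, coroot, Prod.snd_sub, Prod.smul_snd, Pi.sub_apply, Pi.smul_apply,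
    Function.comp_apply, Equiv.swap_apply_def, Pi.single_apply, smul_eq_mul]
  split_ifs <;> subst_vars <;> ring

theorem foldl_sV_take_finRoot (r : ℤ) {a b : Fin n} (ha : (a : ℕ) ≠ 0) (hab : a < b)
    (hb : (b : ℕ) = n - 1) {m : ℕ} (hm : m < n) :
    ((List.finRange n).take (m + 1)).foldl (fun y i => sV i y) (r, finRoot a b)
      = (r + 1, finRoot (if m < a then a else prevIdx a) ⟨m, hm⟩) := by
  induction m with
  | zero =>
    have hb' : prevIdx (⟨0, hm⟩ : Fin n) = b :=
      Fin.ext (by rw [prevIdx_val_of_eq_zero rfl, hb])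
    rw [List.foldl_take_add_one _ _ _ (by simpa using hm)]
    simp only [List.take_zero, List.foldl_nil, List.getElem_finRange, Fin.cast_mk, sV_apply,
      finRoot_comp_swap, if_pos (Nat.pos_of_ne_zero ha), if_true, hb', Equiv.swap_apply_left,
      Equiv.swap_apply_of_ne_of_ne hab.ne (Fin.ne_of_val_ne (j := ⟨0, hm⟩) ha)]
    refine Prod.ext ?_ rfl
    change r - (finRoot a b (prevIdx _) - finRoot a b _) = r + 1
    rw [hb']
    have hb0 : 0 ≠ (b : ℕ) := by have := Fin.lt_def.mp hab; omega
    simp [finRoot, hab.ne', Fin.ext_iff, ha, hb0]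
  | succ m ih =>
    have hi : prevIdx (⟨m + 1, hm⟩ : Fin n) = ⟨m, by omega⟩ :=
      Fin.ext (prevIdx_val_of_ne_zero (by simp))
    rw [List.foldl_take_add_one _ _ _ (by simpa using hm), ih (by omega)]
    simp only [List.getElem_finRange, Fin.cast_mk, sV_apply, finRoot_comp_swap]
    rw [hi, Equiv.swap_apply_left, if_neg m.succ_ne_zero, sub_zero]
    congr 2
    have hpa := prevIdx_val_of_ne_zero ha
    rcases lt_trichotomy (m + 1) a with h | h | h
    · rw [if_pos (by omega), if_pos h]
      exact Equiv.swap_apply_of_ne_of_ne (Fin.ne_of_val_ne (show (a : ℕ) ≠ m by omega))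
        (Fin.ne_of_val_ne (show (a : ℕ) ≠ m + 1 by omega))
    · obtain rfl : a = ⟨m + 1, hm⟩ := Fin.ext h.symm
      rw [if_pos (by simp), if_neg (by simp), hi, Equiv.swap_apply_right]
    · rw [if_neg (by omega), if_neg (by omega)]
      exact Equiv.swap_apply_of_ne_of_ne (Fin.ne_of_val_ne (show (prevIdx a : ℕ) ≠ m by omega))
        (Fin.ne_of_val_ne (show (prevIdx a : ℕ) ≠ m + 1 by omega))

theorem tauV_finRoot (r : ℤ) {a b : Fin n} (ha : (a : ℕ) ≠ 0) (hab : a < b)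
    (hb : (b : ℕ) = n - 1) : tauV n (r, finRoot a b) = (r + 1, finRoot (prevIdx a) b) := by
  have hn : n - 1 < n := hb ▸ b.isLt
  have h := foldl_sV_take_finRoot r ha hab hb hn
  rw [Nat.sub_add_cancel (by omega), List.take_of_length_le (by simp)] at h
  rw [tauV, h, if_neg (by rw [Fin.lt_def] at hab; omega), (Fin.ext hb.symm : ⟨n - 1, hn⟩ = b)]

theorem iterate_tauV_alphaV {b : Fin n} (hb : (b : ℕ) = n - 1) {i : ℕ} (hi : i + 2 ≤ n) :
    (tauV n)^[i] (alphaV b) = ((i : ℤ), finRoot (prevIdx^[i + 1] b) b) := by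
  induction i with
  | zero => exact alphaV_of_ne_zero_s15 (by omega)
  | succ i ih =>
    have hprev := prevIdx_iterate_val b (k := i + 1) (by omega)
    rw [Function.iterate_succ_apply', ih (by omega),
      tauV_finRoot _ (by omega) (Fin.lt_def.mpr (by omega)) hb,
      Function.iterate_succ_apply' _ (i + 1), Nat.cast_succ]

theorem sum_alphaV_filter {b : Fin n} (hb : (b : ℕ) = n - 1) {i : ℕ} (hi : i + 2 ≤ n) :
    ∑ k ∈ Finset.univ.filter (fun k : Fin n => n - i - 1 ≤ (k : ℕ)), alphaV k
      = (0, finRoot (prevIdx^[i + 1] b) b) := by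
  induction i with
  | zero =>
    have hfilter : Finset.univ.filter (fun k : Fin n => n - 0 - 1 ≤ (k : ℕ)) = {b} := by
      ext k
      simp only [Finset.mem_filter, Finset.mem_univ, true_and, Finset.mem_singleton, Fin.ext_iff]
      omega
    rw [hfilter, Finset.sum_singleton, alphaV_of_ne_zero_s15 (by omega)]
    rfl
  | succ i ih =>
    have hprev := prevIdx_iterate_val b (k := i + 1) (by omega)
    have hfilter : Finset.univ.filter (fun k : Fin n => n - (i + 1) - 1 ≤ (k : ℕ))
        = insert (prevIdx^[i + 1] b)
            (Finset.univ.filter (fun k : Fin n => n - i - 1 ≤ (k : ℕ))) := by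
      ext k
      simp only [Finset.mem_filter, Finset.mem_univ, true_and, Finset.mem_insert, Fin.ext_iff,
        hprev]
      omega
    rw [hfilter, Finset.sum_insert (by simp only [Finset.mem_filter, not_and, hprev]; omega),
      ih (by omega), alphaV_of_ne_zero_s15 (by omega), Prod.mk_add_mk, add_zero, finRoot_add_finRoot,
      ← Function.iterate_succ_apply' prevIdx (i + 1)]

/-- For `1 ≤ i ≤ n-2`,
`τ^i(α_{n-1}) = iδ + α_{n-i-1} + ⋯ + α_{n-1}`, a positive real affine root. -/
theorem stmt15 {n : ℕ} (hn : 3 ≤ n) (i : ℕ) (hi2 : i ≤ n - 2) :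
    (tauV n)^[i] (alphaV (⟨n - 1, by omega⟩ : Fin n))
        = (i : ℤ) • deltaV n
          + ∑ k ∈ Finset.univ.filter (fun k : Fin n => n - i - 1 ≤ (k : ℕ)), alphaV k ∧
      IsPosRealRoot ((tauV n)^[i] (alphaV (⟨n - 1, by omega⟩ : Fin n))) := by
  have hb : ((⟨n - 1, by omega⟩ : Fin n) : ℕ) = n - 1 := rfl
  rw [iterate_tauV_alphaV hb (by omega)]
  refine ⟨?_, isPosRealRoot_of_lt ?_ (Int.natCast_nonneg i)⟩
  · rw [sum_alphaV_filter hb (by omega)]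
    ext <;> simp [deltaV]
  · rw [Fin.lt_def, prevIdx_iterate_val _ (by omega), hb]
    omega
end

section
/- For the action of τ on the affine root lattice V of type Ã_{n−1}: for every 1 ≤ i ≤ n−2, τ^i(s_{n−1}∘s_{n−2}∘⋯∘s_1(α_0)) = (i+1)δ + α_{n−i−1} + α_{n−i} + ⋯ + α_{n−1}. In particular each of these elements is a positive real affine root. -/
/-- Apply a sequence of reflections: `applySeq [i₁, …, i_k] x = s_{i_k}(⋯(s_{i₁} x))`,
i.e. the composite `s_{i_k} ∘ ⋯ ∘ s_{i₁}` applied to `x`. -/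
def applySeq {n : ℕ} (l : List (Fin n)) (x : V n) : V n := l.foldl (fun y i => sV i y) x

/-! On the finite part `ℤⁿ`, the reflection `s_i` transposes the coordinates `i - 1` and `i`
(cyclically), and only `s_0` changes the `δ`-coefficient. Writing `f_k` for the `0`-based
basis, `s_1, …, s_{n-1}` therefore carry `f_a - f_0` (`a ≥ 1`) to `f_{a-1} - f_{n-1}` without
touching `δ`, so `s_{n-1}⋯s_1(α_0) = δ + f_{n-2} - f_{n-1}`, and `τ` sends `rδ + f_m - f_{n-1}` to
`(r+1)δ + f_{m-1} - f_{n-1}` for `1 ≤ m ≤ n - 2`. Hence the `i`-th iterate is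
`(i+1)δ + f_{n-2-i} - f_{n-1}`, which is also what `α_{n-i-1} + ⋯ + α_{n-1}` telescopes to. -/

namespace AffineRootLattice

variable {n : ℕ}

def root (r : ℤ) (a b : Fin n) : V n := (r, Pi.single a 1 - Pi.single b 1)

lemma prevIdx_of_pos {j : ℕ} (h1 : 1 ≤ j) (h2 : j < n) :
    prevIdx (⟨j, h2⟩ : Fin n) = ⟨j - 1, by omega⟩ := by
  ext
  simp only [prevIdx]
  rw [show j + (n - 1) = j - 1 + n by omega, Nat.add_mod_right, Nat.mod_eq_of_lt (by omega)]

lemma prevIdx_zero (h : 0 < n) : prevIdx (⟨0, h⟩ : Fin n) = ⟨n - 1, by omega⟩ := by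
  ext
  show (0 + (n - 1)) % n = n - 1
  rw [zero_add, Nat.mod_eq_of_lt (by omega)]

lemma prevIdx_ne_self (hn : 2 ≤ n) (i : Fin n) : prevIdx i ≠ i := by
  obtain ⟨j, hj⟩ := i
  rcases Nat.eq_zero_or_pos j with rfl | hpos
  · rw [prevIdx_zero]
    simp only [ne_eq, Fin.mk.injEq]
    omega
  · rw [prevIdx_of_pos hpos hj]
    simp only [ne_eq, Fin.mk.injEq]
    omega

lemma sV_eq_add_of_coroot_eq_neg {i : Fin n} {x : V n} {c : ℤ} (h : coroot i x = -c) :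
    sV i x = x + c • alphaV i := by
  rw [sV, h, neg_smul, sub_neg_eq_add]

lemma sV_root_prevIdx {i a : Fin n} (r : ℤ) (hp : prevIdx i ≠ i) (hap : a ≠ prevIdx i)
    (hai : a ≠ i) :
    sV i (root r a (prevIdx i)) = root (r + if (i : ℕ) = 0 then 1 else 0) a i := by
  rw [sV_eq_add_of_coroot_eq_neg (c := 1)]
  · simp only [root, alphaV, one_smul, Prod.mk_add_mk, sub_add_sub_cancel]
  · simp [coroot, root, hp, hap.symm, hai.symm]

lemma sV_root_self_prevIdx {i : Fin n} (r : ℤ) (hp : prevIdx i ≠ i) :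
    sV i (root r i (prevIdx i)) = root (r + 2 * if (i : ℕ) = 0 then 1 else 0) (prevIdx i) i := by
  rw [sV_eq_add_of_coroot_eq_neg (c := 2)]
  · simp only [root, alphaV, Prod.mk_add_mk, Prod.smul_mk, smul_eq_mul, Prod.mk.injEq, true_and]
    rw [two_smul]
    abel
  · simp [coroot, root, hp, hp.symm]

lemma finRange_drop_eq_cons {j : ℕ} (hj : j < n) :
    (List.finRange n).drop j = ⟨j, hj⟩ :: (List.finRange n).drop (j + 1) := by
  rw [List.drop_eq_getElem_cons (by simpa using hj), List.getElem_finRange]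
  rfl

lemma applySeq_cons (i : Fin n) (l : List (Fin n)) (x : V n) :
    applySeq (i :: l) x = applySeq l (sV i x) := rfl

lemma applySeq_drop_root (hn : 2 ≤ n) {j : ℕ} (hj1 : 1 ≤ j) (hjn : j ≤ n) (r : ℤ) (a : Fin n)
    (ha : (a : ℕ) ≠ j - 1) :
    applySeq ((List.finRange n).drop j) (root r a ⟨j - 1, by omega⟩) =
      root r (if j ≤ (a : ℕ) then ⟨a - 1, by omega⟩ else a) ⟨n - 1, by omega⟩ := by
  induction hjn using Nat.decreasingInduction generalizing a with
  | self =>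
    rw [List.drop_eq_nil_of_le (by simp), if_neg (by omega)]
    rfl
  | of_succ j hj ih =>
    have hprev := prevIdx_of_pos hj1 hj
    have hp := prevIdx_ne_self hn ⟨j, hj⟩
    have hj0 : ((⟨j, hj⟩ : Fin n) : ℕ) ≠ 0 := by simp only; omega
    simp only [Nat.add_sub_cancel] at ih
    rw [finRange_drop_eq_cons hj, applySeq_cons, ← hprev]
    by_cases haj : (a : ℕ) = j
    · obtain rfl : a = ⟨j, hj⟩ := Fin.ext haj
      rw [sV_root_self_prevIdx r hp, if_neg hj0, mul_zero, add_zero, hprev,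
        ih (by omega) _ (by simp only; omega), if_neg (by simp), if_pos le_rfl]
    · rw [sV_root_prevIdx r hp (by rw [hprev]; exact Fin.ne_of_val_ne ha) (Fin.ne_of_val_ne haj),
        if_neg hj0, add_zero, ih (by omega) a (by simpa using haj)]
      congr 1
      split_ifs <;> first | rfl | omega

lemma alphaV_zero_eq_root (h : 0 < n) :
    alphaV (⟨0, h⟩ : Fin n) = root 1 ⟨n - 1, by omega⟩ ⟨0, h⟩ := by
  rw [alphaV, prevIdx_zero h, if_pos rfl, root]

lemma alphaV_eq_root_of_pos {j : ℕ} (h1 : 1 ≤ j) (h2 : j < n) :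
    alphaV (⟨j, h2⟩ : Fin n) = root 0 ⟨j - 1, by omega⟩ ⟨j, h2⟩ := by
  rw [alphaV, prevIdx_of_pos h1 h2, if_neg (by simp only; omega), root]

lemma root_add_root (r s : ℤ) (a b c : Fin n) : root r a b + root s b c = root (r + s) a c := by
  simp only [root, Prod.mk_add_mk, sub_add_sub_cancel]

lemma smul_deltaV_add_root (c r : ℤ) (a b : Fin n) :
    c • deltaV n + root r a b = root (c + r) a b := by
  simp [deltaV, root]

lemma root_self (a : Fin n) : root 0 a a = 0 := by
  simp [root]

lemma isPosRealRoot_root {r : ℤ} {a b : Fin n} (hab : a ≠ b) (hr : 0 < r) :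
    IsPosRealRoot (root r a b) :=
  ⟨a, b, rfl, Or.inl ⟨hab, hr⟩⟩

lemma applySeq_drop_one_alphaV_zero (hn : 2 ≤ n) :
    applySeq ((List.finRange n).drop 1) (alphaV ⟨0, by omega⟩) =
      root 1 ⟨n - 2, by omega⟩ ⟨n - 1, by omega⟩ := by
  rw [alphaV_zero_eq_root, applySeq_drop_root hn le_rfl (by omega) 1 _ (by simp only; omega),
    if_pos (by simp only; omega)]
  rfl

lemma tauV_eq_applySeq_drop_one (h : 0 < n) (x : V n) :
    tauV n x = applySeq ((List.finRange n).drop 1) (sV ⟨0, h⟩ x) := by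
  rw [← applySeq_cons, ← finRange_drop_eq_cons h, List.drop_zero]
  rfl

lemma tauV_root (hn : 2 ≤ n) (r : ℤ) {m : ℕ} (hm1 : 1 ≤ m) (hm : m ≤ n - 2) :
    tauV n (root r ⟨m, by omega⟩ ⟨n - 1, by omega⟩) =
      root (r + 1) ⟨m - 1, by omega⟩ ⟨n - 1, by omega⟩ := by
  have h0 : 0 < n := by omega
  have hprev := prevIdx_zero h0
  rw [tauV_eq_applySeq_drop_one h0, ← hprev,
    sV_root_prevIdx r (prevIdx_ne_self hn _)
      (by rw [hprev]; simp only [ne_eq, Fin.mk.injEq]; omega)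
      (by simp only [ne_eq, Fin.mk.injEq]; omega), if_pos rfl,
    applySeq_drop_root hn le_rfl (by omega) (r + 1) _ (by simp only; omega), if_pos hm1, hprev]

lemma iterate_tauV_root (hn : 2 ≤ n) (r : ℤ) {m i : ℕ} (hm : m ≤ n - 2) (hi : i ≤ m) :
    (tauV n)^[i] (root r ⟨m, by omega⟩ ⟨n - 1, by omega⟩) =
      root (r + i) ⟨m - i, by omega⟩ ⟨n - 1, by omega⟩ := by
  induction i with
  | zero => simp
  | succ i ih =>
    rw [Function.iterate_succ_apply', ih (by omega), tauV_root hn _ (by omega) (by omega)]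
    simp only [Nat.sub_sub, Nat.cast_succ, add_assoc]

lemma sum_alphaV_filter_le {m : ℕ} (hm1 : 1 ≤ m) (hm : m ≤ n) :
    ∑ k ∈ Finset.univ.filter (fun k : Fin n => m ≤ (k : ℕ)), alphaV k =
      root 0 ⟨m - 1, by omega⟩ ⟨n - 1, by omega⟩ := by
  induction hm using Nat.decreasingInduction with
  | self =>
    rw [Finset.filter_false_of_mem (fun k _ => by omega), Finset.sum_empty]
    exact (root_self _).symm
  | of_succ m hm ih =>
    simp only [Nat.add_sub_cancel] at ih
    have hsplit : Finset.univ.filter (fun k : Fin n => m ≤ (k : ℕ)) =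
        insert ⟨m, hm⟩ (Finset.univ.filter (fun k : Fin n => m + 1 ≤ (k : ℕ))) := by
      ext k
      simp only [Finset.mem_filter, Finset.mem_univ, true_and, Finset.mem_insert, Fin.ext_iff]
      omega
    rw [hsplit, Finset.sum_insert (by simp), ih (by omega), alphaV_eq_root_of_pos hm1 hm,
      root_add_root, add_zero]

end AffineRootLattice

open AffineRootLattice

/-- For `1 ≤ i ≤ n-2`,
`τ^i(s_{n-1}∘⋯∘s_1(α_0)) = (i+1)δ + α_{n-i-1} + ⋯ + α_{n-1}`, a positive real affine
root.  (Here `(List.finRange n).drop 1 = [1, …, n-1]`, so `applySeq` applies `s_1`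
first and `s_{n-1}` last.) -/
theorem stmt17 {n : ℕ} (hn : 3 ≤ n) (i : ℕ) (hi2 : i ≤ n - 2) :
    (tauV n)^[i] (applySeq ((List.finRange n).drop 1) (alphaV (⟨0, by omega⟩ : Fin n)))
        = ((i : ℤ) + 1) • deltaV n
          + ∑ k ∈ Finset.univ.filter (fun k : Fin n => n - i - 1 ≤ (k : ℕ)), alphaV k ∧
      IsPosRealRoot
        ((tauV n)^[i]
          (applySeq ((List.finRange n).drop 1) (alphaV (⟨0, by omega⟩ : Fin n)))) := by
  have hn2 : 2 ≤ n := by omega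
  rw [applySeq_drop_one_alphaV_zero hn2, iterate_tauV_root hn2 1 le_rfl hi2,
    sum_alphaV_filter_le (m := n - i - 1) (by omega) (by omega), smul_deltaV_add_root, add_zero,
    add_comm]
  have hidx : (⟨n - 2 - i, by omega⟩ : Fin n) = ⟨n - i - 1 - 1, by omega⟩ :=
    Fin.ext (by simp only; omega)
  rw [hidx]
  exact ⟨rfl, isPosRealRoot_root (by simp only [ne_eq, Fin.mk.injEq]; omega) (by positivity)⟩
end
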